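/- arXiv:1607.00081 — 8 statements merged into one kernel-verified Lean document; each statement's English description precedes it below -/
import Mathlib

section
/- Let f : ℝ → ℝ be continuous, even, and satisfy f(p) ≥ 1 for all p ∈ ℝ, and set k_max := ∫₀^∞ dp / f(p) ∈ (0, ∞]. Then the function g(p) := ∫₀^p dq / f(q) is a strictly increasing bijection from ℝ onto the open interval (−k_max, k_max), and its inverse function p : (−k_max, k_max) → ℝ is differentiable and satisfies the ordinary differential equation p'(k) = f(p(k)) for all k ∈ (−k_max, k_max), together with p(0) = 0. -/
/-!
The primitive `g` of the positive, even, continuous function `1 / f` is odd, strictly increasing and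
continuous, so its range is the symmetric interval whose right end is `sup g = ∫₀^∞ dp / f(p)`
(monotone convergence). Its inverse is then continuous on this open interval, and the inverse
function theorem in one variable gives `p' = 1 / g'(p) = f ∘ p`.
-/

open MeasureTheory Set
open scoped ENNReal

open Filter Topology Function

theorem Function.Even.odd_intervalIntegral {φ : ℝ → ℝ} (hφ : φ.Even) :
    Function.Odd fun x => ∫ q in (0 : ℝ)..x, φ q := by
  intro x
  have h := intervalIntegral.integral_comp_neg (a := 0) (b := x) φ
  simp only [hφ.eq, neg_zero] at h
  simp [h, intervalIntegral.integral_symm (-x) 0]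

theorem setLIntegral_Ioi_zero_eq_iSup_ofReal_integral {φ : ℝ → ℝ} (hφ : LocallyIntegrable φ)
    (hφ_nonneg : 0 ≤ φ) :
    ∫⁻ q in Ioi 0, ENNReal.ofReal (φ q) = ⨆ n : ℕ, ENNReal.ofReal (∫ q in (0 : ℝ)..n, φ q) := by
  have hIoc : Monotone fun n : ℕ => Ioc (0 : ℝ) n := fun m n hmn => Ioc_subset_Ioc_right (by simpa)
  rw [← iUnion_Ioc_eq_Ioi_self_iff.2 fun x _ => exists_nat_ge x,
    setLIntegral_iUnion_of_directed _ hIoc.directed_le]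
  refine iSup_congr fun n => ?_
  rw [intervalIntegral.integral_of_le n.cast_nonneg']
  exact (ofReal_integral_eq_lintegral_ofReal
    ((hφ.integrableOn_isCompact isCompact_Icc).mono_set Ioc_subset_Icc_self)
    (.of_forall hφ_nonneg)).symm

theorem StrictMono.range_eq_setOf_ofReal_abs_lt_iSup {g : ℝ → ℝ} (hmono : StrictMono g)
    (hcont : Continuous g) (hodd : g.Odd) :
    range g = {k | ENNReal.ofReal |k| < ⨆ x, ENNReal.ofReal (g x)} := by
  have hg0 : g 0 = 0 := hodd.map_zero
  ext k
  constructor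
  · rintro ⟨x, rfl⟩
    have habs : |g x| = g |x| := by
      rcases le_or_gt 0 x with hx | hx
      · rw [abs_of_nonneg hx, abs_of_nonneg (hg0 ▸ hmono.monotone hx)]
      · rw [abs_of_neg hx, abs_of_neg (hg0 ▸ hmono hx), hodd.eq]
    have hpos : 0 < g (|x| + 1) := hg0 ▸ hmono (by positivity)
    calc ENNReal.ofReal |g x| < ENNReal.ofReal (g (|x| + 1)) := by
          rw [habs, ENNReal.ofReal_lt_ofReal_iff hpos]
          exact hmono (lt_add_one _)
      _ ≤ ⨆ x, ENNReal.ofReal (g x) := le_iSup (fun x => ENNReal.ofReal (g x)) _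
  · intro hk
    obtain ⟨x, hx⟩ := lt_iSup_iff.1 hk.out
    have hkx : |k| < g x := (ENNReal.ofReal_lt_ofReal_iff_of_nonneg (abs_nonneg k)).1 hx
    have hk_mem : k ∈ Icc (g (-x)) (g x) := by
      rw [hodd.eq]
      exact ⟨by linarith [neg_abs_le k], by linarith [le_abs_self k]⟩
    have hx_nonneg : -x ≤ x := hmono.le_iff_le.1 (hk_mem.1.trans hk_mem.2)
    obtain ⟨y, -, hy⟩ := intermediate_value_Icc hx_nonneg hcont.continuousOn hk_mem
    exact ⟨y, hy⟩

theorem StrictMono.continuousAt_invFun {α β : Type*} [LinearOrder α] [TopologicalSpace α]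
    [OrderTopology α] [DenselyOrdered α] [Nonempty α] [LinearOrder β] [TopologicalSpace β]
    [OrderTopology β] {g : α → β} (hmono : StrictMono g) {k : β}
    (hk : range g ∈ 𝓝 k) : ContinuousAt (invFun g) k := by
  have hinv : StrictMonoOn (invFun g) (range g) := by
    rintro _ ⟨x, rfl⟩ _ ⟨y, rfl⟩ hxy
    simpa only [leftInverse_invFun hmono.injective _] using hmono.lt_iff_lt.1 hxy
  refine hinv.continuousAt_of_image_mem_nhds hk ?_
  rw [← range_comp, (leftInverse_invFun hmono.injective).comp_eq_id, range_id]
  exact univ_mem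

theorem StrictMono.hasDerivAt_invFun {g : ℝ → ℝ} (hmono : StrictMono g) {k g' : ℝ}
    (hk : range g ∈ 𝓝 k) (hg : HasDerivAt g g' (invFun g k)) (hg' : g' ≠ 0) :
    HasDerivAt (invFun g) g'⁻¹ k :=
  hg.of_local_left_inverse (hmono.continuousAt_invFun hk) hg'
    (mem_of_superset hk fun _ hy => invFun_eq hy)

/-- For a continuous, even modification `f ≥ 1`, the function
`g(p) = ∫₀^p dq / f(q)` is a strictly increasing bijection from `ℝ` onto the
interval `(−k_max, k_max)` (with `k_max = ∫₀^∞ dp / f(p) ∈ (0,∞]`), and its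
inverse `p` satisfies `p' = f ∘ p` with `p 0 = 0`. -/
theorem modified_momentum_construction
    (f : ℝ → ℝ) (hf_cont : Continuous f)
    (hf_even : ∀ p : ℝ, f (-p) = f p) (hf_ge : ∀ p : ℝ, 1 ≤ f p)
    (kmax : ℝ≥0∞)
    (hkmax : kmax = ∫⁻ p in Set.Ioi (0 : ℝ), ENNReal.ofReal (1 / f p))
    (I : Set ℝ) (hI : I = {k : ℝ | ENNReal.ofReal |k| < kmax})
    (g : ℝ → ℝ) (hg : ∀ p : ℝ, g p = ∫ q in (0 : ℝ)..p, 1 / f q) :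
    0 < kmax ∧ StrictMono g ∧ Set.BijOn g Set.univ I ∧
      ∃ p : ℝ → ℝ, (∀ x : ℝ, p (g x) = x) ∧ (∀ k ∈ I, g (p k) = k) ∧
        p 0 = 0 ∧ ∀ k ∈ I, HasDerivAt p (f (p k)) k := by
  have hpos (p : ℝ) : 0 < 1 / f p := one_div_pos.2 (one_pos.trans_le (hf_ge p))
  have hcont : Continuous fun p => 1 / f p :=
    continuous_const.div hf_cont fun p => (one_div_pos.1 (hpos p)).ne'
  have hg_eq : g = fun p => ∫ q in (0 : ℝ)..p, 1 / f q := funext hg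
  have hderiv (p : ℝ) : HasDerivAt g (1 / f p) p :=
    hg_eq ▸ (hcont.integral_hasStrictDerivAt 0 p).hasDerivAt
  have hmono : StrictMono g := strictMono_of_hasDerivAt_pos hderiv hpos
  have hodd : g.Odd := hg_eq ▸ Function.Even.odd_intervalIntegral fun p => by simp only [hf_even]
  have hkmax_iSup : kmax = ⨆ x, ENNReal.ofReal (g x) := by
    rw [hkmax, setLIntegral_Ioi_zero_eq_iSup_ofReal_integral hcont.locallyIntegrable
      fun p => (hpos p).le]
    exact hg_eq ▸ (ENNReal.ofReal_mono.comp hmono.monotone).iSup_comp_eq exists_nat_ge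
  have hrange : range g = I := by
    rw [hI, hkmax_iSup, hmono.range_eq_setOf_ofReal_abs_lt_iSup
      (continuous_iff_continuousAt.2 fun p => (hderiv p).continuousAt) hodd]
  have hopen : IsOpen (range g) := by
    rw [hrange, hI]
    exact isOpen_lt (ENNReal.continuous_ofReal.comp continuous_abs) continuous_const
  have hleft : LeftInverse (invFun g) g := leftInverse_invFun hmono.injective
  refine ⟨?_, hmono, ?_, invFun g, hleft, fun k hk => invFun_eq (hrange.ge hk), ?_, ?_⟩
  · rw [hkmax_iSup]
    exact (ENNReal.ofReal_pos.2 (hodd.map_zero ▸ hmono one_pos)).trans_le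
      (le_iSup (fun x => ENNReal.ofReal (g x)) 1)
  · rw [← hrange, ← image_univ]
    exact hmono.injective.injOn.bijOn_image
  · simpa only [hodd.map_zero] using hleft 0
  · intro k hk
    simpa only [one_div, inv_inv] using
      hmono.hasDerivAt_invFun (hopen.mem_nhds (hrange.ge hk)) (hderiv _) (hpos _).ne'
end

section
/- Let f : ℝ → ℝ be continuous, locally Lipschitz, even, and satisfy f(p) ≥ 1 for all p ∈ ℝ, set k_max := ∫₀^∞ dp / f(p) ∈ (0, ∞], and let p : (−k_max, k_max) → ℝ be the inverse of g(p) = ∫₀^p dq / f(q). Then every differentiable function q : J → ℝ defined on an open interval J containing 0 that satisfies q(0) = 0 and q'(k) = f(q(k)) for all k ∈ J must have J ⊆ (−k_max, k_max) and q(k) = p(k) for all k ∈ J. -/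
open MeasureTheory Set
open scoped ENNReal

/-- Uniqueness of the modified momentum function. Any solution `q`
of the ODE `q' = f ∘ q`, `q 0 = 0` on an open interval `J` containing `0`
stays inside `(−k_max, k_max)` and coincides there with the canonical inverse
`p` of `g(p) = ∫₀^p dq / f(q)`. -/
theorem modified_momentum_uniqueness
    (f : ℝ → ℝ) (hf_cont : Continuous f) (hf_lip : LocallyLipschitz f)
    (hf_even : ∀ p : ℝ, f (-p) = f p) (hf_ge : ∀ p : ℝ, 1 ≤ f p)
    (kmax : ℝ≥0∞)
    (hkmax : kmax = ∫⁻ p in Set.Ioi (0 : ℝ), ENNReal.ofReal (1 / f p))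
    (I : Set ℝ) (hI : I = {k : ℝ | ENNReal.ofReal |k| < kmax})
    (g : ℝ → ℝ) (hg : ∀ p : ℝ, g p = ∫ s in (0 : ℝ)..p, 1 / f s)
    (p : ℝ → ℝ) (hpg : ∀ x : ℝ, p (g x) = x) (hgp : ∀ k ∈ I, g (p k) = k)
    (J : Set ℝ) (hJ_open : IsOpen J) (hJ_conn : J.OrdConnected)
    (hJ0 : (0 : ℝ) ∈ J)
    (q : ℝ → ℝ) (hq0 : q 0 = 0)
    (hq : ∀ k ∈ J, HasDerivAt q (f (q k)) k) :
    J ⊆ I ∧ ∀ k ∈ J, q k = p k := by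
  have hf_pos : ∀ x : ℝ, (0:ℝ) < f x := fun x => lt_of_lt_of_le one_pos (hf_ge x)
  have hf_ne : ∀ x : ℝ, f x ≠ 0 := fun x => (hf_pos x).ne'
  have hcont : Continuous (fun s : ℝ => 1 / f s) :=
    continuous_const.div hf_cont hf_ne
  have hint : ∀ a b : ℝ, IntervalIntegrable (fun s => 1 / f s) volume a b :=
    fun a b => hcont.intervalIntegrable a b
  have hgfun : g = fun x : ℝ => ∫ s in (0:ℝ)..x, 1 / f s := funext hg
  have hg' : ∀ x : ℝ, HasDerivAt g (1 / f x) x := by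
    intro x
    rw [hgfun]
    exact intervalIntegral.integral_hasDerivAt_right (hint 0 x)
      hcont.aestronglyMeasurable.stronglyMeasurableAtFilter hcont.continuousAt
  have hg0 : g 0 = 0 := by rw [hg]; simp
  -- key: g (q k) = k on J
  have hJconv : Convex ℝ J := hJ_conn.convex
  have key : ∀ k ∈ J, g (q k) = k := by
    intro k hk
    have hder : ∀ x ∈ J, HasDerivWithinAt (fun k => g (q k) - k) ((fun _ : ℝ => (0:ℝ)) x) J x := by
      intro x hx
      have h1 : HasDerivAt (fun k => g (q k)) (1 / f (q x) * f (q x)) x :=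
        (hg' (q x)).comp x (hq x hx)
      have h2 : HasDerivAt (fun k => g (q k) - k) (1 / f (q x) * f (q x) - 1) x :=
        h1.sub (hasDerivAt_id x)
      have : 1 / f (q x) * f (q x) - 1 = 0 := by
        rw [one_div_mul_cancel (hf_ne (q x))]; ring
      rw [this] at h2
      exact h2.hasDerivWithinAt
    have hbound : ∀ x ∈ J, ‖(fun _ : ℝ => (0:ℝ)) x‖ ≤ 0 := by intro x _; simp
    have := hJconv.norm_image_sub_le_of_norm_hasDerivWithin_le hder hbound hJ0 hk
    simp only [zero_mul, norm_le_zero_iff, sub_eq_zero] at this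
    have h0 : g (q 0) - 0 = 0 := by rw [hq0, hg0]; ring
    rw [h0] at this
    linarith [sub_eq_zero.mp this]
  -- g is odd and nonneg on nonneg
  have g_odd : ∀ x : ℝ, g (-x) = -g x := by
    intro x
    have h1 : (∫ s in (0:ℝ)..x, 1 / f (-s)) = ∫ s in (-x)..(0:ℝ), 1 / f s := by
      simpa using intervalIntegral.integral_comp_neg (a := 0) (b := x) (fun s => 1 / f s)
    have h2 : (∫ s in (0:ℝ)..x, 1 / f (-s)) = g x := by
      rw [hg]; exact intervalIntegral.integral_congr fun s _ => by rw [hf_even]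
    have h3 : (∫ s in (-x)..(0:ℝ), 1 / f s) = -g (-x) := by
      rw [hg]; exact (intervalIntegral.integral_symm _ _)
    have : g x = -g (-x) := by rw [← h2, h1, h3]
    linarith
  have g_nonneg : ∀ x : ℝ, 0 ≤ x → 0 ≤ g x := by
    intro x hx
    rw [hg]
    exact intervalIntegral.integral_nonneg hx fun s _ => le_of_lt (div_pos one_pos (hf_pos s))
  have abs_g : ∀ a : ℝ, |g a| = g |a| := by
    intro a
    rcases le_or_gt 0 a with h | h
    · rw [abs_of_nonneg h, abs_of_nonneg (g_nonneg a h)]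
    · have : g a = -g (-a) := by rw [← g_odd, neg_neg]
      rw [abs_of_neg h, this, abs_neg, abs_of_nonneg (g_nonneg _ (by linarith))]
  -- ofReal (g b) = lintegral over Ioc 0 b, for b ≥ 0
  have ofReal_g : ∀ b : ℝ, 0 ≤ b →
      ENNReal.ofReal (g b) = ∫⁻ s in Set.Ioc (0:ℝ) b, ENNReal.ofReal (1 / f s) := by
    intro b hb
    rw [hg, intervalIntegral.integral_of_le hb]
    exact MeasureTheory.ofReal_integral_eq_lintegral_ofReal (hint 0 b).1
      (Filter.Eventually.of_forall fun s => le_of_lt (div_pos one_pos (hf_pos s)))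
  -- membership in I
  have mem_I : ∀ k ∈ J, k ∈ I := by
    intro k hk
    rw [hI]
    show ENNReal.ofReal |k| < kmax
    have hk' : g (q k) = k := key k hk
    set b := |q k| with hbdef
    have hb : 0 ≤ b := abs_nonneg _
    have habs : |k| = g b := by rw [← hk', abs_g]
    -- g b < g (b+1)
    have hsplit : g b + (∫ s in b..(b+1), 1 / f s) = g (b+1) := by
      rw [hg, hg]
      exact intervalIntegral.integral_add_adjacent_intervals (hint 0 b) (hint b (b+1))
    have hpos : 0 < ∫ s in b..(b+1), 1 / f s := by
      apply intervalIntegral.integral_pos (by linarith)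
        (hcont.continuousOn)
      · intro s _; exact le_of_lt (div_pos one_pos (hf_pos s))
      · exact ⟨b, ⟨le_refl b, by linarith⟩, div_pos one_pos (hf_pos b)⟩
    have hlt : g b < g (b+1) := by linarith
    have h1 : ENNReal.ofReal |k| < ENNReal.ofReal (g (b+1)) := by
      rw [habs]
      exact ENNReal.ofReal_lt_ofReal_iff (by linarith [g_nonneg b hb]) |>.mpr hlt
    refine h1.trans_le ?_
    rw [ofReal_g (b+1) (by linarith), hkmax]
    exact lintegral_mono_set Set.Ioc_subset_Ioi_self
  refine ⟨mem_I, ?_⟩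
  intro k hk
  have := hpg (q k)
  rw [key k hk] at this
  exact this.symm
end

section
/- Let β > 0, k_max = π/(2√β), I = (−k_max, k_max), and p(k) = tan(√β k)/√β. Let ψ : ℝ → ℂ be smooth with compact support contained in I and ∫ |ψ(k)|² dk = 1, and define ⟨x⟩ := ∫ conj(ψ(k)) · i ψ'(k) dk, Var x := ∫ |ψ'(k)|² dk − ⟨x⟩², ⟨p⟩ := ∫ p(k)|ψ(k)|² dk, Var p := ∫ p(k)²|ψ(k)|² dk − ⟨p⟩². Then Var x · Var p ≥ (1/4)(1 + β Var p + β⟨p⟩²)² ≥ (1/4)(1 + β Var p)². -/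
open MeasureTheory Set

/-- Continuity of a product `v * u` when `v` is continuous on an open set `I`
containing the (closed) support of the continuous function `u`. -/
lemma kmm_aux_cont {E : Type*} [NormedRing E] {I : Set ℝ}
    {v u : ℝ → E} (hv : ∀ k ∈ I, ContinuousAt v k) (hu : Continuous u)
    (hsupp : tsupport u ⊆ I) : Continuous (fun k => v k * u k) := by
  rw [continuous_iff_continuousAt]
  intro k
  by_cases hk : k ∈ I
  · exact (hv k hk).mul hu.continuousAt
  · have hk' : k ∉ tsupport u := fun h => hk (hsupp h)
    have hzero : (fun k => v k * u k) =ᶠ[nhds k] (fun _ => 0) := by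
      filter_upwards [(isClosed_tsupport u).isOpen_compl.mem_nhds hk'] with x hx
      simp [image_eq_zero_of_notMem_tsupport hx]
    exact ContinuousAt.congr continuousAt_const hzero.symm

lemma kmm_supp_aux {E F : Type*} [Zero E] [Zero F] {ψ : ℝ → E} {u : ℝ → F}
    (hu : ∀ x, ψ x = 0 → u x = 0) : tsupport u ⊆ tsupport ψ := by
  apply closure_mono
  intro x hx
  rw [Function.mem_support] at hx ⊢
  exact fun h0 => hx (hu x h0)

lemma kmm_hcs_aux {E F : Type*} [Zero E] [Zero F] {ψ : ℝ → E} {u : ℝ → F}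
    (hψ : HasCompactSupport ψ) (hu : ∀ x, ψ x = 0 → u x = 0) : HasCompactSupport u :=
  IsCompact.of_isClosed_subset hψ (isClosed_tsupport u) (kmm_supp_aux hu)

/-- Cauchy–Schwarz for continuous compactly supported functions. -/
lemma kmm_cs_aux {F G : ℝ → ℂ} (hFc : Continuous F) (hGc : Continuous G)
    (hF : HasCompactSupport F) (hG : HasCompactSupport G) :
    ‖∫ k : ℝ, (starRingEnd ℂ) (F k) * G k‖^2 ≤ (∫ k : ℝ, ‖F k‖^2) * (∫ k : ℝ, ‖G k‖^2) := by
  set a := ∫ k : ℝ, ‖F k‖^2 with ha_def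
  set b := ∫ k : ℝ, ‖G k‖^2 with hb_def
  have ha : 0 ≤ a := integral_nonneg fun k => by positivity
  have hb : 0 ≤ b := integral_nonneg fun k => by positivity
  have hconj : Real.HolderConjugate 2 2 := Real.HolderConjugate.two_two
  have hmemF : MemLp (fun k => ‖F k‖) (ENNReal.ofReal 2) (volume : Measure ℝ) :=
    hFc.norm.memLp_of_hasCompactSupport (hF.norm)
  have hmemG : MemLp (fun k => ‖G k‖) (ENNReal.ofReal 2) (volume : Measure ℝ) :=
    hGc.norm.memLp_of_hasCompactSupport (hG.norm)
  have hH := integral_mul_le_Lp_mul_Lq_of_nonneg hconj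
    (Filter.Eventually.of_forall fun k => norm_nonneg (F k))
    (Filter.Eventually.of_forall fun k => norm_nonneg (G k)) hmemF hmemG
  have hpow : ∀ H : ℝ → ℂ, (∫ k : ℝ, ‖H k‖ ^ (2:ℝ)) = ∫ k : ℝ, ‖H k‖^2 := by
    intro H
    refine integral_congr_ae (Filter.Eventually.of_forall fun k => ?_)
    show ‖H k‖ ^ (2:ℝ) = ‖H k‖ ^ (2:ℕ)
    rw [show (2:ℝ) = ((2:ℕ):ℝ) by norm_num, Real.rpow_natCast]
  rw [hpow F, hpow G, ← ha_def, ← hb_def] at hH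
  have h1 : ‖∫ k : ℝ, (starRingEnd ℂ) (F k) * G k‖ ≤ ∫ k : ℝ, ‖F k‖ * ‖G k‖ := by
    refine le_trans (norm_integral_le_integral_norm _) (le_of_eq ?_)
    refine integral_congr_ae (Filter.Eventually.of_forall fun k => ?_)
    show ‖(starRingEnd ℂ) (F k) * G k‖ = ‖F k‖ * ‖G k‖
    rw [norm_mul, RCLike.norm_conj]
  have h2 : ‖∫ k : ℝ, (starRingEnd ℂ) (F k) * G k‖ ≤ a ^ (1/2:ℝ) * b ^ (1/2:ℝ) :=
    le_trans h1 hH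
  calc ‖∫ k : ℝ, (starRingEnd ℂ) (F k) * G k‖^2
      ≤ (a ^ (1/2:ℝ) * b ^ (1/2:ℝ))^2 := pow_le_pow_left₀ (norm_nonneg _) h2 2
    _ = a * b := by
        rw [mul_pow, ← Real.rpow_natCast (a ^ (1/2:ℝ)) 2, ← Real.rpow_natCast (b ^ (1/2:ℝ)) 2,
          ← Real.rpow_mul ha, ← Real.rpow_mul hb]
        norm_num

/-- Derivative of `k ↦ ‖ψ k‖²`. -/
lemma kmm_normsq_deriv (ψ : ℝ → ℂ) (hd : ∀ k, HasDerivAt ψ (deriv ψ k) k) (k : ℝ) :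
    HasDerivAt (fun k => ‖ψ k‖^2) (2 * ((starRingEnd ℂ) (ψ k) * deriv ψ k).re) k := by
  have hg : HasDerivAt (fun k => (starRingEnd ℂ) (ψ k) * ψ k)
      ((starRingEnd ℂ) (deriv ψ k) * ψ k + (starRingEnd ℂ) (ψ k) * deriv ψ k) k :=
    ((hd k).star.mul (hd k))
  have h2 : HasDerivAt (fun x => ((starRingEnd ℂ) (ψ x) * ψ x).re)
      (((starRingEnd ℂ) (deriv ψ k) * ψ k + (starRingEnd ℂ) (ψ k) * deriv ψ k).re) k :=
    Complex.reCLM.hasFDerivAt.comp_hasDerivAt k hg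
  have h3 : (fun x => ((starRingEnd ℂ) (ψ x) * ψ x).re) = fun x => ‖ψ x‖^2 := by
    funext z
    rw [Complex.sq_norm, Complex.normSq_apply, Complex.mul_re,
      Complex.conj_re, Complex.conj_im]
    ring
  rw [h3] at h2
  convert h2 using 1
  simp [Complex.add_re, Complex.mul_re, Complex.conj_re, Complex.conj_im]
  ring

lemma kmm_ptwise1 (a b : ℂ) (m : ℝ) :
    ‖Complex.I * a - (m:ℂ) * b‖^2
      = ‖a‖^2 + m^2*‖b‖^2 - 2*m*((starRingEnd ℂ) b * (Complex.I * a)).re := by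
  simp [Complex.sq_norm, Complex.normSq_apply, Complex.mul_re,
    Complex.mul_im, Complex.sub_re, Complex.sub_im, Complex.conj_re, Complex.conj_im,
    Complex.I_re, Complex.I_im, Complex.ofReal_re, Complex.ofReal_im]
  ring

lemma kmm_ptwise2 (a b : ℂ) (m c : ℝ) :
    ((starRingEnd ℂ) (Complex.I * a - (m:ℂ) * b) * ((c:ℂ) * b)).im
      = -(c * ((starRingEnd ℂ) b * a).re) := by
  simp [Complex.mul_im, Complex.mul_re, Complex.sub_re, Complex.sub_im, Complex.conj_re,
    Complex.conj_im, Complex.I_re, Complex.I_im, Complex.ofReal_re, Complex.ofReal_im]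
  ring

lemma kmm_ptwise3 (b : ℂ) (c : ℝ) : ‖(c:ℂ) * b‖^2 = c^2 * ‖b‖^2 := by
  simp [norm_mul, mul_pow, sq_abs, Complex.norm_real]

/-- Kempf–Mangano–Mann state-independent uncertainty relation for
`f(p) = 1 + β p²`, in the unmodified momentum representation on
`I = (−π/(2√β), π/(2√β))` with `p(k) = tan(√β k)/√β`:
`Var x · Var p ≥ (1/4)(1 + β Var p + β ⟨p⟩²)² ≥ (1/4)(1 + β Var p)²`. -/
theorem kempf_uncertainty_relation
    (β : ℝ) (hβ : 0 < β)
    (I : Set ℝ)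
    (hI : I = Set.Ioo (-(Real.pi / (2 * Real.sqrt β))) (Real.pi / (2 * Real.sqrt β)))
    (p : ℝ → ℝ)
    (hp : ∀ k : ℝ, p k = Real.tan (Real.sqrt β * k) / Real.sqrt β)
    (ψ : ℝ → ℂ) (hψ_smooth : ContDiff ℝ (⊤ : ℕ∞) ψ)
    (hψ_comp : HasCompactSupport ψ) (hψ_supp : tsupport ψ ⊆ I)
    (hψ_norm : (∫ k : ℝ, ‖ψ k‖ ^ 2) = 1)
    (meanx : ℝ)
    (hmx : (meanx : ℂ) = ∫ k : ℝ, (starRingEnd ℂ) (ψ k) * (Complex.I * deriv ψ k))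
    (varx : ℝ) (hvx : varx = (∫ k : ℝ, ‖deriv ψ k‖ ^ 2) - meanx ^ 2)
    (meanp : ℝ) (hmp : meanp = ∫ k : ℝ, p k * ‖ψ k‖ ^ 2)
    (varp : ℝ) (hvp : varp = (∫ k : ℝ, p k ^ 2 * ‖ψ k‖ ^ 2) - meanp ^ 2) :
    varx * varp ≥ (1 / 4) * (1 + β * varp + β * meanp ^ 2) ^ 2 ∧
    (1 / 4) * (1 + β * varp + β * meanp ^ 2) ^ 2 ≥ (1 / 4) * (1 + β * varp) ^ 2 := by
  set s := Real.sqrt β with hs_def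
  have hβ2 : s ^ 2 = β := Real.sq_sqrt hβ.le
  have hs0 : 0 < s := Real.sqrt_pos.mpr hβ
  -- cosine does not vanish on I
  have hcos : ∀ k ∈ I, Real.cos (s * k) ≠ 0 := by
    intro k hk
    rw [hI] at hk
    have h1 : s * k < Real.pi / 2 := by
      calc s * k < s * (Real.pi / (2 * s)) := (mul_lt_mul_iff_right₀ hs0).mpr hk.2
        _ = Real.pi / 2 := by field_simp
    have h2 : -(Real.pi / 2) < s * k := by
      calc -(Real.pi / 2) = s * (-(Real.pi / (2 * s))) := by field_simp
        _ < s * k := (mul_lt_mul_iff_right₀ hs0).mpr hk.1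
    exact ne_of_gt (Real.cos_pos_of_mem_Ioo ⟨h2, h1⟩)
  -- derivative of p on I
  have hpd : ∀ k ∈ I, HasDerivAt p (1 + β * p k ^ 2) k := by
    intro k hk
    have hc := hcos k hk
    have hlin : HasDerivAt (fun x : ℝ => s * x) s k := by
      simpa using (hasDerivAt_id k).const_mul s
    have htan : HasDerivAt (fun x : ℝ => Real.tan (s * x)) (1 / Real.cos (s * k) ^ 2 * s) k :=
      (Real.hasDerivAt_tan hc).comp k hlin
    have hdiv := htan.div_const s
    have hfun : (fun x : ℝ => Real.tan (s * x) / s) = p := by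
      funext x; rw [hp x]
    rw [hfun] at hdiv
    refine hdiv.congr_deriv ?_
    have hsec : 1 / Real.cos (s * k) ^ 2 = 1 + Real.tan (s * k) ^ 2 := by
      rw [Real.tan_eq_sin_div_cos]
      field_simp
      exact (Real.cos_sq_add_sin_sq _).symm
    have hβt : β * p k ^ 2 = Real.tan (s * k) ^ 2 := by
      rw [hp k, div_pow, ← hβ2]
      field_simp
    rw [hβt, mul_div_assoc, div_self (ne_of_gt hs0), mul_one, hsec]
  have hpc : ∀ k ∈ I, ContinuousAt p k := fun k hk =>
    (hpd k hk).differentiableAt.continuousAt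
  -- ψ facts
  have hψd : ∀ k, HasDerivAt ψ (deriv ψ k) k := fun k =>
    (hψ_smooth.differentiable (by simp) k).hasDerivAt
  have hψc : Continuous ψ := hψ_smooth.continuous
  have hψ'c : Continuous (deriv ψ) := hψ_smooth.continuous_deriv (by simp)
  have hψ's : tsupport (deriv ψ) ⊆ I :=
    (closure_minimal support_deriv_subset (isClosed_tsupport ψ)).trans hψ_supp
  have hψ'comp : HasCompactSupport (deriv ψ) := hψ_comp.deriv
  -- basic integrable building blocks
  have hu1c : Continuous (fun k => ‖ψ k‖ ^ 2) := (hψc.norm.pow 2)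
  have hu1cs : HasCompactSupport (fun k => ‖ψ k‖ ^ 2) :=
    kmm_hcs_aux hψ_comp (fun x hx => by simp [hx])
  have int_u1 : Integrable (fun k => ‖ψ k‖ ^ 2) (volume : Measure ℝ) :=
    hu1c.integrable_of_hasCompactSupport hu1cs
  have hu1supp : tsupport (fun k => ‖ψ k‖ ^ 2) ⊆ I :=
    (kmm_supp_aux (fun x hx => by simp [hx])).trans hψ_supp
  have hpψc : Continuous (fun k => p k * ‖ψ k‖ ^ 2) :=
    kmm_aux_cont (fun k hk => hpc k hk) hu1c hu1supp
  have int_pψ : Integrable (fun k => p k * ‖ψ k‖ ^ 2) (volume : Measure ℝ) :=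
    hpψc.integrable_of_hasCompactSupport (kmm_hcs_aux hψ_comp (fun x hx => by simp [hx]))
  have hp2ψc : Continuous (fun k => p k ^ 2 * ‖ψ k‖ ^ 2) :=
    kmm_aux_cont (fun k hk => (hpc k hk).pow 2) hu1c hu1supp
  have int_p2ψ : Integrable (fun k => p k ^ 2 * ‖ψ k‖ ^ 2) (volume : Measure ℝ) :=
    hp2ψc.integrable_of_hasCompactSupport (kmm_hcs_aux hψ_comp (fun x hx => by simp [hx]))
  have int_dψ : Integrable (fun k => ‖deriv ψ k‖ ^ 2) (volume : Measure ℝ) :=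
    (hψ'c.norm.pow 2).integrable_of_hasCompactSupport
      (kmm_hcs_aux hψ'comp (fun x hx => by simp [hx]))
  -- the mean-x cross term
  have hcrossc : Continuous (fun k => ((starRingEnd ℂ) (ψ k) * (Complex.I * deriv ψ k))) :=
    (continuous_star.comp hψc).mul (continuous_const.mul hψ'c)
  have int_cross : Integrable (fun k => ((starRingEnd ℂ) (ψ k) * (Complex.I * deriv ψ k)))
      (volume : Measure ℝ) :=
    hcrossc.integrable_of_hasCompactSupport (kmm_hcs_aux hψ_comp (fun x hx => by simp [hx]))
  have int_crossre : Integrable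
      (fun k => ((starRingEnd ℂ) (ψ k) * (Complex.I * deriv ψ k)).re) (volume : Measure ℝ) :=
    (Complex.continuous_re.comp hcrossc).integrable_of_hasCompactSupport
      (kmm_hcs_aux hψ_comp (fun x hx => by simp [hx]))
  have hcross_val : (∫ k : ℝ, ((starRingEnd ℂ) (ψ k) * (Complex.I * deriv ψ k)).re) = meanx := by
    have h := Complex.reCLM.integral_comp_comm int_cross
    have h2 : (∫ k : ℝ, (starRingEnd ℂ) (ψ k) * (Complex.I * deriv ψ k)) = (meanx : ℂ) :=
      hmx.symm
    calc (∫ k : ℝ, ((starRingEnd ℂ) (ψ k) * (Complex.I * deriv ψ k)).re)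
        = (∫ k : ℝ, (starRingEnd ℂ) (ψ k) * (Complex.I * deriv ψ k)).re := h
      _ = meanx := by rw [h2]; exact Complex.ofReal_re meanx
  -- the F and G functions
  set F : ℝ → ℂ := fun k => Complex.I * deriv ψ k - (meanx : ℂ) * ψ k with hF_def
  set G : ℝ → ℂ := fun k => ((p k - meanp : ℝ) : ℂ) * ψ k with hG_def
  have hFc : Continuous F := (continuous_const.mul hψ'c).sub (continuous_const.mul hψc)
  have hGc : Continuous G := by
    apply kmm_aux_cont (v := fun k => ((p k - meanp : ℝ) : ℂ)) _ hψc hψ_supp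
    intro k hk
    exact Complex.continuous_ofReal.continuousAt.comp ((hpc k hk).sub continuousAt_const)
  have hFcs : HasCompactSupport F := by
    apply IsCompact.of_isClosed_subset (hψ_comp.union hψ'comp) (isClosed_tsupport F)
    refine closure_minimal ?_ ((isClosed_tsupport ψ).union (isClosed_tsupport (deriv ψ)))
    intro x hx
    by_contra hmem
    rw [Set.mem_union] at hmem
    push_neg at hmem
    have h1 : ψ x = 0 := image_eq_zero_of_notMem_tsupport hmem.1
    have h2 : deriv ψ x = 0 := image_eq_zero_of_notMem_tsupport hmem.2
    rw [Function.mem_support] at hx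
    exact hx (by simp [hF_def, h1, h2])
  have hGcs : HasCompactSupport G := kmm_hcs_aux hψ_comp (fun x hx => by simp [hG_def, hx])
  -- ∫ ‖F‖² = varx
  have hvarx : (∫ k : ℝ, ‖F k‖ ^ 2) = varx := by
    have e1 : (fun k => ‖F k‖ ^ 2) = fun k =>
        ‖deriv ψ k‖ ^ 2 + meanx ^ 2 * ‖ψ k‖ ^ 2
          - 2 * meanx * ((starRingEnd ℂ) (ψ k) * (Complex.I * deriv ψ k)).re :=
      funext fun k => kmm_ptwise1 (deriv ψ k) (ψ k) meanx
    have intsum : Integrable (fun k => ‖deriv ψ k‖ ^ 2 + meanx ^ 2 * ‖ψ k‖ ^ 2)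
        (volume : Measure ℝ) := int_dψ.add (int_u1.const_mul _)
    have intc : Integrable (fun k => 2 * meanx * ((starRingEnd ℂ) (ψ k) * (Complex.I * deriv ψ k)).re)
        (volume : Measure ℝ) := int_crossre.const_mul _
    rw [e1, integral_sub intsum intc, integral_add int_dψ (int_u1.const_mul _),
      integral_const_mul, integral_const_mul, hψ_norm, hcross_val, hvx]
    ring
  -- ∫ ‖G‖² = varp
  have hvarp : (∫ k : ℝ, ‖G k‖ ^ 2) = varp := by
    have e2 : (fun k => ‖G k‖ ^ 2) = fun k =>
        p k ^ 2 * ‖ψ k‖ ^ 2 - 2 * meanp * (p k * ‖ψ k‖ ^ 2) + meanp ^ 2 * ‖ψ k‖ ^ 2 := by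
      funext k
      rw [hG_def]
      rw [kmm_ptwise3 (ψ k) (p k - meanp)]
      ring
    have intsub : Integrable (fun k => p k ^ 2 * ‖ψ k‖ ^ 2 - 2 * meanp * (p k * ‖ψ k‖ ^ 2))
        (volume : Measure ℝ) := int_p2ψ.sub (int_pψ.const_mul _)
    have intc2 : Integrable (fun k => meanp ^ 2 * ‖ψ k‖ ^ 2) (volume : Measure ℝ) :=
      int_u1.const_mul _
    rw [e2, integral_add intsub intc2, integral_sub int_p2ψ (int_pψ.const_mul _),
      integral_const_mul, integral_const_mul, hψ_norm, ← hmp, hvp]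
    ring
  have hvarp0 : 0 ≤ varp := by
    rw [← hvarp]
    exact integral_nonneg fun k => by positivity
  -- integration by parts: the function h = (p - meanp)·‖ψ‖² and its derivative D
  set A : ℝ → ℝ := fun k => (1 + β * p k ^ 2) * ‖ψ k‖ ^ 2 with hA_def
  set B : ℝ → ℝ := fun k =>
    (p k - meanp) * (2 * ((starRingEnd ℂ) (ψ k) * deriv ψ k).re) with hB_def
  set h : ℝ → ℝ := fun k => (p k - meanp) * ‖ψ k‖ ^ 2 with hh_def
  have hD : ∀ k, HasDerivAt h (A k + B k) k := by
    intro k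
    by_cases hk : k ∈ I
    · exact ((hpd k hk).sub_const meanp).mul (kmm_normsq_deriv ψ hψd k)
    · have hk' : k ∉ tsupport ψ := fun hmem => hk (hψ_supp hmem)
      have hψ0 : ψ k = 0 := image_eq_zero_of_notMem_tsupport hk'
      have hev : h =ᶠ[nhds k] fun _ => 0 := by
        filter_upwards [(isClosed_tsupport ψ).isOpen_compl.mem_nhds hk'] with x hx
        simp [hh_def, image_eq_zero_of_notMem_tsupport hx]
      have h0 : HasDerivAt h 0 k := (hasDerivAt_const k (0 : ℝ)).congr_of_eventuallyEq hev
      convert h0 using 1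
      simp [hA_def, hB_def, hψ0]
  have hBc : Continuous B := by
    apply kmm_aux_cont (v := fun k => p k - meanp) (fun k hk => (hpc k hk).sub continuousAt_const)
    · exact continuous_const.mul (Complex.continuous_re.comp
        ((continuous_star.comp hψc).mul hψ'c))
    · refine (kmm_supp_aux (fun x hx => ?_)).trans hψ_supp
      simp [hx]
  have hAc : Continuous A := by
    apply kmm_aux_cont (v := fun k => 1 + β * p k ^ 2)
      (fun k hk => continuousAt_const.add (continuousAt_const.mul ((hpc k hk).pow 2)))
      hu1c hu1supp
  have int_A : Integrable A (volume : Measure ℝ) :=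
    hAc.integrable_of_hasCompactSupport (kmm_hcs_aux hψ_comp (fun x hx => by simp [hA_def, hx]))
  have int_B : Integrable B (volume : Measure ℝ) :=
    hBc.integrable_of_hasCompactSupport (kmm_hcs_aux hψ_comp (fun x hx => by simp [hB_def, hx]))
  have hhcs : HasCompactSupport h := kmm_hcs_aux hψ_comp (fun x hx => by simp [hh_def, hx])
  have hhcd : ContDiff ℝ 1 h := by
    rw [contDiff_one_iff_deriv]
    refine ⟨fun k => (hD k).differentiableAt, ?_⟩
    have : deriv h = fun k => A k + B k := funext fun k => (hD k).deriv
    rw [this]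
    exact hAc.add hBc
  have hderiv_eq : deriv h = fun k => A k + B k := funext fun k => (hD k).deriv
  have int_D : Integrable (deriv h) (volume : Measure ℝ) := by
    rw [hderiv_eq]; exact int_A.add int_B
  have hIBP : (∫ k : ℝ, A k + B k) = 0 := by
    have h1 := HasCompactSupport.integral_Iic_deriv_eq hhcd hhcs 0
    have h2 := HasCompactSupport.integral_Ioi_deriv_eq hhcd hhcs 0
    have h3 := intervalIntegral.integral_Iic_add_Ioi (b := (0:ℝ)) int_D.integrableOn
      int_D.integrableOn
    rw [← hderiv_eq, ← h3, h1, h2]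
    ring
  have hintA : (∫ k : ℝ, A k) = 1 + β * (∫ k : ℝ, p k ^ 2 * ‖ψ k‖ ^ 2) := by
    have e3 : (fun k => A k) = fun k => ‖ψ k‖ ^ 2 + β * (p k ^ 2 * ‖ψ k‖ ^ 2) := by
      funext k; rw [hA_def]; ring
    have intc3 : Integrable (fun k => β * (p k ^ 2 * ‖ψ k‖ ^ 2)) (volume : Measure ℝ) :=
      int_p2ψ.const_mul _
    rw [e3, integral_add int_u1 intc3, integral_const_mul, hψ_norm]
  have hintB : (∫ k : ℝ, B k) = -(1 + β * (∫ k : ℝ, p k ^ 2 * ‖ψ k‖ ^ 2)) := by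
    have := integral_add int_A int_B
    rw [hIBP] at this
    rw [← hintA]
    linarith [this.symm, hintA]
  -- the inner product J and its imaginary part
  have int_FG : Integrable (fun k => (starRingEnd ℂ) (F k) * G k) (volume : Measure ℝ) :=
    ((continuous_star.comp hFc).mul hGc).integrable_of_hasCompactSupport
      (kmm_hcs_aux hGcs (fun x hx => by simp [hx]))
  set J : ℂ := ∫ k : ℝ, (starRingEnd ℂ) (F k) * G k with hJ_def
  have hJim : J.im = (1 + β * (∫ k : ℝ, p k ^ 2 * ‖ψ k‖ ^ 2)) / 2 := by
    have him : (∫ k : ℝ, ((starRingEnd ℂ) (F k) * G k).im)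
        = (∫ k : ℝ, (starRingEnd ℂ) (F k) * G k).im :=
      Complex.imCLM.integral_comp_comm int_FG
    have e4 : (fun k => ((starRingEnd ℂ) (F k) * G k).im) = fun k => -(1/2) * B k := by
      funext k
      have hpt := kmm_ptwise2 (deriv ψ k) (ψ k) meanx (p k - meanp)
      simp only [hF_def, hG_def, hB_def]
      rw [hpt]
      ring
    have h5 : (∫ k : ℝ, ((starRingEnd ℂ) (F k) * G k).im) = -(1/2) * ∫ k : ℝ, B k := by
      rw [e4, integral_const_mul]
    rw [hJ_def, ← him, h5, hintB]
    ring
  -- Cauchy–Schwarz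
  have hCS : ‖J‖ ^ 2 ≤ varx * varp := by
    rw [← hvarx, ← hvarp]
    exact kmm_cs_aux hFc hGc hFcs hGcs
  have hJim2 : J.im ^ 2 ≤ ‖J‖ ^ 2 := by
    have h6 : |J.im| ≤ ‖J‖ := Complex.abs_im_le_norm J
    calc J.im ^ 2 = |J.im| ^ 2 := (sq_abs _).symm
      _ ≤ ‖J‖ ^ 2 := pow_le_pow_left₀ (abs_nonneg _) h6 2
  have hP2 : (∫ k : ℝ, p k ^ 2 * ‖ψ k‖ ^ 2) = varp + meanp ^ 2 := by
    rw [hvp]; ring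
  have hmain : varx * varp ≥ (1 / 4) * (1 + β * varp + β * meanp ^ 2) ^ 2 := by
    have h7 : J.im ^ 2 ≤ varx * varp := le_trans hJim2 hCS
    rw [hJim, hP2] at h7
    calc (1 / 4) * (1 + β * varp + β * meanp ^ 2) ^ 2
        = ((1 + β * (varp + meanp ^ 2)) / 2) ^ 2 := by ring
      _ ≤ varx * varp := h7
  refine ⟨hmain, ?_⟩
  have hb1 : 0 ≤ 1 + β * varp := by nlinarith
  have hb2 : 0 ≤ β * meanp ^ 2 := by positivity
  nlinarith [sq_nonneg (1 + β * varp + β * meanp ^ 2), sq_nonneg (1 + β * varp),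
    mul_nonneg hb1 hb2, sq_nonneg (β * meanp ^ 2)]
end

section
/- Let β > 0, γ > 1/2, I = (−π/(2√β), π/(2√β)), and let ψ_γ(k) := κ(γ)^{−1/2} cos(√β k)^γ for k ∈ I (extended by 0 outside I), where κ(γ) := ∫_I cos(√β k)^{2γ} dk. With p(k) = tan(√β k)/√β, define Var x := ∫_I |ψ_γ'(k)|² dk and Var p := ∫_I p(k)² ψ_γ(k)² dk (the first moments of x and p vanish for these states). Then Var x · Var p = (1/4)(1 + β Var p)², i.e. the states ψ_γ saturate the uncertainty relation Var x · Var p ≥ (1/4)(1 + β Var p)² for every γ > 1/2. -/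
/-!
Write `s = √β` and substitute `t = s k`. Both variances are then multiples of the single integral
`J = ∫_{-π/2}^{π/2} sin² t cos^{2γ-2} t`: `ψ'²` and `p² ψ²` are `κ⁻¹ γ² β` and `κ⁻¹ / β` times
`sin²(s k) cos^{2γ-2}(s k)`. Integrating by parts gives the reduction formula
`∫ cos^{2γ} = (2γ - 1) J`, i.e. `κ = (2γ - 1) J / s`, so `β Var p = 1 / (2γ - 1)` and
`Var x · Var p = γ² / (2γ - 1)² = (1/4) (1 + β Var p)²`.
-/

open MeasureTheory Set
open scoped Classical

open Real

namespace Real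

lemma hasDerivAt_sin_sub_sin_mul_cos_rpow {r t : ℝ} (ht : 0 < cos t) :
    HasDerivAt (fun t => sin t - sin t * cos t ^ (r - 1))
      (cos t - cos t ^ r + (r - 1) * (sin t ^ 2 * cos t ^ (r - 2))) t := by
  have hpow : HasDerivAt (fun t => cos t ^ (r - 1))
      (-sin t * (r - 1) * cos t ^ (r - 1 - 1)) t :=
    (hasDerivAt_cos t).rpow_const (Or.inl ht.ne')
  refine ((hasDerivAt_sin t).sub ((hasDerivAt_sin t).mul hpow)).congr_deriv ?_
  rw [show r - 1 - 1 = r - 2 by ring, rpow_sub_one ht.ne', rpow_sub ht, rpow_two]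
  field_simp
  ring

/- For `r < 2` the integrand `sin² cos ^ (r - 2)` is singular at `±π/2`; its integrability comes
for free because `sin - sin · cos ^ (r - 1)` has a nonnegative derivative. -/
theorem integral_cos_rpow_eq {r : ℝ} (hr : 1 < r) :
    ∫ t in -(π / 2)..π / 2, cos t ^ r =
      (r - 1) * ∫ t in -(π / 2)..π / 2, sin t ^ 2 * cos t ^ (r - 2) := by
  set Φ : ℝ → ℝ := fun t => sin t - sin t * cos t ^ (r - 1)
  set Φ' : ℝ → ℝ := fun t => cos t - cos t ^ r + (r - 1) * (sin t ^ 2 * cos t ^ (r - 2))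
  have hle : -(π / 2) ≤ π / 2 := by linarith [pi_pos]
  have hcont : Continuous Φ := continuous_sin.sub
    (continuous_sin.mul ((continuous_rpow_const (by linarith)).comp continuous_cos))
  have hderiv : ∀ t ∈ Ioo (-(π / 2)) (π / 2), HasDerivAt Φ (Φ' t) t :=
    fun t ht => hasDerivAt_sin_sub_sin_mul_cos_rpow (cos_pos_of_mem_Ioo ht)
  have hΦ' : IntervalIntegrable Φ' volume (-(π / 2)) (π / 2) := by
    refine intervalIntegral.intervalIntegrable_deriv_of_nonneg hcont.continuousOn
      (by simpa [hle] using hderiv) (fun t ht => ?_)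
    have hcos := cos_pos_of_mem_Ioo (by simpa [hle] using ht)
    have : cos t ^ r ≤ cos t := rpow_le_self_of_le_one hcos.le (cos_le_one t) hr.le
    have : 0 ≤ sin t ^ 2 * cos t ^ (r - 2) := by positivity
    nlinarith
  have hcos_r : IntervalIntegrable (fun t => cos t ^ r) volume (-(π / 2)) (π / 2) :=
    ((continuous_rpow_const (by linarith)).comp continuous_cos).intervalIntegrable _ _
  have hsin_cos : IntervalIntegrable (fun t => (r - 1) * (sin t ^ 2 * cos t ^ (r - 2)))
      volume (-(π / 2)) (π / 2) := by
    convert (hΦ'.sub (continuous_cos.intervalIntegrable _ _)).add hcos_r using 1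
    ext t
    simp only [Φ']
    ring
  have hFTC : ∫ t in -(π / 2)..π / 2, Φ' t = 2 := by
    rw [intervalIntegral.integral_eq_sub_of_hasDerivAt_of_le hle hcont.continuousOn hderiv hΦ']
    norm_num [Φ, zero_rpow (by linarith : r - 1 ≠ 0)]
  rw [intervalIntegral.integral_add ((continuous_cos.intervalIntegrable _ _).sub hcos_r) hsin_cos,
    intervalIntegral.integral_sub (continuous_cos.intervalIntegrable _ _) hcos_r,
    integral_cos, intervalIntegral.integral_const_mul] at hFTC
  simp only [sin_neg, sin_pi_div_two] at hFTC
  linarith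

theorem integral_cos_rpow_pos {r : ℝ} (hr : 0 ≤ r) :
    0 < ∫ t in -(π / 2)..π / 2, cos t ^ r :=
  intervalIntegral.intervalIntegral_pos_of_pos_on
    (((continuous_rpow_const hr).comp continuous_cos).intervalIntegrable _ _)
    (fun _ ht => rpow_pos_of_pos (cos_pos_of_mem_Ioo ht) _) (by linarith [pi_pos])

theorem integral_sin_sq_mul_cos_rpow_pos {r : ℝ} (hr : 1 < r) :
    0 < ∫ t in -(π / 2)..π / 2, sin t ^ 2 * cos t ^ (r - 2) :=
  pos_of_mul_pos_right (integral_cos_rpow_eq hr ▸ integral_cos_rpow_pos (by linarith))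
    (by linarith)

end Real

theorem setIntegral_Ioo_div_comp_mul {s a b : ℝ} (hs : 0 < s) (hab : a ≤ b) (f : ℝ → ℝ) :
    ∫ k in Ioo (a / s) (b / s), f (s * k) = s⁻¹ * ∫ t in a..b, f t := by
  rw [← integral_Ioc_eq_integral_Ioo, ← intervalIntegral.integral_of_le
    (div_le_div_of_nonneg_right hab hs.le), intervalIntegral.integral_comp_mul_left _ hs.ne',
    mul_div_cancel₀ _ hs.ne', mul_div_cancel₀ _ hs.ne', smul_eq_mul]

section CosPowerStates

variable {c s γ : ℝ}

lemma cos_mul_pos_of_mem_Ioo_div (hs : 0 < s) {k : ℝ}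
    (hk : k ∈ Ioo (-(π / 2) / s) (π / 2 / s)) : 0 < cos (s * k) :=
  cos_pos_of_mem_Ioo ⟨(div_lt_iff₀' hs).1 hk.1, (lt_div_iff₀' hs).1 hk.2⟩

lemma sq_deriv_eq_of_eventuallyEq_mul_cos_rpow {ψ : ℝ → ℝ} {k : ℝ} (hk : 0 < cos (s * k))
    (hψ : ψ =ᶠ[nhds k] fun x => c * cos (s * x) ^ γ) :
    deriv ψ k ^ 2 = c ^ 2 * γ ^ 2 * s ^ 2 * (sin (s * k) ^ 2 * cos (s * k) ^ (2 * γ - 2)) := by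
  have hcos : HasDerivAt (fun x => cos (s * x)) (-sin (s * k) * s) k := by
    simpa using ((hasDerivAt_id' k).const_mul s).cos
  rw [hψ.deriv_eq, ((hcos.rpow_const (p := γ) (Or.inl hk.ne')).const_mul c).deriv,
    show 2 * γ - 2 = (γ - 1) * (2 : ℕ) by push_cast; ring, rpow_mul_natCast hk.le]
  ring

lemma sq_tan_div_mul_sq_mul_cos_rpow {t : ℝ} (hs : s ≠ 0) (ht : 0 < cos t) :
    (tan t / s) ^ 2 * (c * cos t ^ γ) ^ 2 =
      c ^ 2 / s ^ 2 * (sin t ^ 2 * cos t ^ (2 * γ - 2)) := by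
  rw [tan_eq_sin_div_cos, rpow_sub ht, rpow_two, mul_comm 2 γ, rpow_mul ht.le, rpow_two]
  field_simp

theorem setIntegral_sq_deriv_of_eqOn_mul_cos_rpow {ψ : ℝ → ℝ} (hs : 0 < s)
    (hψ : EqOn ψ (fun k => c * cos (s * k) ^ γ) (Ioo (-(π / 2) / s) (π / 2 / s))) :
    ∫ k in Ioo (-(π / 2) / s) (π / 2 / s), deriv ψ k ^ 2 =
      c ^ 2 * γ ^ 2 * s ^ 2 *
        (s⁻¹ * ∫ t in -(π / 2)..π / 2, sin t ^ 2 * cos t ^ (2 * γ - 2)) := by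
  rw [setIntegral_congr_fun measurableSet_Ioo fun k hk =>
      sq_deriv_eq_of_eventuallyEq_mul_cos_rpow (cos_mul_pos_of_mem_Ioo_div hs hk)
        (Filter.eventuallyEq_of_mem (isOpen_Ioo.mem_nhds hk) hψ),
    integral_const_mul,
    setIntegral_Ioo_div_comp_mul hs (by linarith [pi_pos])
      (fun t => sin t ^ 2 * cos t ^ (2 * γ - 2))]

theorem setIntegral_sq_tan_div_mul_sq_of_eqOn_mul_cos_rpow {ψ : ℝ → ℝ} (hs : 0 < s)
    (hψ : EqOn ψ (fun k => c * cos (s * k) ^ γ) (Ioo (-(π / 2) / s) (π / 2 / s))) :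
    ∫ k in Ioo (-(π / 2) / s) (π / 2 / s), (tan (s * k) / s) ^ 2 * ψ k ^ 2 =
      c ^ 2 / s ^ 2 * (s⁻¹ * ∫ t in -(π / 2)..π / 2, sin t ^ 2 * cos t ^ (2 * γ - 2)) := by
  rw [setIntegral_congr_fun measurableSet_Ioo (g := fun k =>
      c ^ 2 / s ^ 2 * (sin (s * k) ^ 2 * cos (s * k) ^ (2 * γ - 2))) fun k hk => by
        rw [hψ hk, sq_tan_div_mul_sq_mul_cos_rpow hs.ne' (cos_mul_pos_of_mem_Ioo_div hs hk)],
    integral_const_mul,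
    setIntegral_Ioo_div_comp_mul hs (by linarith [pi_pos])
      (fun t => sin t ^ 2 * cos t ^ (2 * γ - 2))]

end CosPowerStates

/-- The states `ψ_γ(k) = κ(γ)^{−1/2} cos(√β k)^γ` (γ > 1/2) on
`I = (−π/(2√β), π/(2√β))`, with `p(k) = tan(√β k)/√β`, saturate the
uncertainty relation: `Var x · Var p = (1/4)(1 + β Var p)²`. -/
theorem optimal_states_saturate
    (β : ℝ) (hβ : 0 < β) (γ : ℝ) (hγ : 1 / 2 < γ)
    (I : Set ℝ)
    (hI : I = Set.Ioo (-(Real.pi / (2 * Real.sqrt β))) (Real.pi / (2 * Real.sqrt β)))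
    (κ : ℝ) (hκ : κ = ∫ k in I, Real.cos (Real.sqrt β * k) ^ (2 * γ))
    (ψ : ℝ → ℝ)
    (hψ : ∀ k : ℝ, ψ k =
      if k ∈ I then κ ^ (-(1 / 2) : ℝ) * Real.cos (Real.sqrt β * k) ^ γ else 0)
    (p : ℝ → ℝ)
    (hp : ∀ k : ℝ, p k = Real.tan (Real.sqrt β * k) / Real.sqrt β)
    (varx varp : ℝ)
    (hvx : varx = ∫ k in I, (deriv ψ k) ^ 2)
    (hvp : varp = ∫ k in I, p k ^ 2 * ψ k ^ 2) :
    varx * varp = (1 / 4) * (1 + β * varp) ^ 2 := by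
  set s := √β
  have hs : 0 < s := sqrt_pos.2 hβ
  obtain rfl : I = Ioo (-(π / 2) / s) (π / 2 / s) := by rw [hI, neg_div, div_div]
  have hψI : EqOn ψ (fun k => κ ^ (-(1 / 2) : ℝ) * cos (s * k) ^ γ) _ :=
    fun k hk => by rw [hψ, if_pos hk]
  set J := ∫ t in -(π / 2)..π / 2, sin t ^ 2 * cos t ^ (2 * γ - 2)
  have hκJ : κ = s⁻¹ * ((2 * γ - 1) * J) := by
    rw [hκ, setIntegral_Ioo_div_comp_mul hs (by linarith [pi_pos]) (fun t => cos t ^ (2 * γ)),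
      integral_cos_rpow_eq (by linarith)]
  have hγ' : 0 < 2 * γ - 1 := by linarith
  have hJ : 0 < J := integral_sin_sq_mul_cos_rpow_pos (by linarith)
  have hnorm : (κ ^ (-(1 / 2) : ℝ)) ^ 2 = κ⁻¹ := by
    rw [← rpow_mul_natCast (by rw [hκJ]; positivity)]
    norm_num [rpow_neg_one]
  have hvx' : varx = κ⁻¹ * γ ^ 2 * β * (s⁻¹ * J) := by
    rw [hvx, setIntegral_sq_deriv_of_eqOn_mul_cos_rpow hs hψI, hnorm, sq_sqrt hβ.le]
  have hvp' : varp = κ⁻¹ / β * (s⁻¹ * J) := by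
    simp only [hvp, hp]
    rw [setIntegral_sq_tan_div_mul_sq_of_eqOn_mul_cos_rpow hs hψI, hnorm, sq_sqrt hβ.le]
  rw [hvx', hvp', hκJ]
  field_simp
  ring
end

section
/- Let N ≥ 1 and let f(p) = 1 + Σ_{n=1}^N a_n p^{2n} with coefficients a_n ≥ 0. Let μ be a Borel probability measure on ℝ such that ∫ |p|^{2N} dμ(p) < ∞, and let m := ∫ p dμ(p) and V := ∫ p² dμ(p) − m² be the mean and variance. Then ∫ f(p) dμ(p) ≥ f(√V). -/
/-!
Each monomial is controlled separately. Since `V ≤ ∫ p² dμ`, Jensen's inequality for the convex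
function `v ↦ vⁿ` on `[0, ∞)` gives `(√V)^(2n) ≤ (∫ p² dμ)ⁿ ≤ ∫ p^(2n) dμ`; multiplying by
`aₙ ≥ 0` and summing yields the bound.
-/

open MeasureTheory Set

lemma integrable_pow_of_integrable_abs_pow {μ : Measure ℝ} [IsFiniteMeasure μ] {k n : ℕ}
    (hkn : k ≤ n) (h : Integrable (fun x : ℝ => |x| ^ n) μ) :
    Integrable (fun x : ℝ => x ^ k) μ := by
  have hmeas : AEStronglyMeasurable (fun x : ℝ => x ^ k) μ := by fun_prop
  refine (integrable_norm_iff hmeas).1 ?_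
  simpa only [norm_pow, Real.norm_eq_abs, id_eq] using
    integrable_norm_pow_of_le (f := id) aestronglyMeasurable_id hkn h

lemma integral_sq_pow_le_integral_pow {Ω : Type*} [MeasurableSpace Ω] {μ : Measure Ω}
    [IsProbabilityMeasure μ] {X : Ω → ℝ} (n : ℕ) (hX2 : Integrable (fun ω => X ω ^ 2) μ)
    (hX2n : Integrable (fun ω => X ω ^ (2 * n)) μ) :
    (∫ ω, X ω ^ 2 ∂μ) ^ n ≤ ∫ ω, X ω ^ (2 * n) ∂μ := by
  simp only [pow_mul]
  exact (convexOn_pow n).map_integral_le (continuous_pow n).continuousOn isClosed_Ici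
    (Filter.Eventually.of_forall fun ω => sq_nonneg (X ω)) hX2
    (by simpa only [Function.comp_def, pow_mul] using hX2n)

theorem jensen_modification_bound_general
    (N : ℕ) (a : ℕ → ℝ) (ha : ∀ n, 0 ≤ a n)
    (f : ℝ → ℝ)
    (hf : ∀ p : ℝ, f p = 1 + ∑ n ∈ Finset.Icc 1 N, a n * p ^ (2 * n))
    (μ : Measure ℝ) [IsProbabilityMeasure μ]
    (hmom : Integrable (fun p : ℝ => |p| ^ (2 * N)) μ)
    (m : ℝ)
    (V : ℝ) (hV : V = (∫ p : ℝ, p ^ 2 ∂μ) - m ^ 2) :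
    (∫ p : ℝ, f p ∂μ) ≥ f (Real.sqrt V) := by
  have hpow (k : ℕ) (hk : k ≤ 2 * N) : Integrable (fun p : ℝ => p ^ k) μ :=
    integrable_pow_of_integrable_abs_pow hk hmom
  have hterm : ∀ n ∈ Finset.Icc 1 N, Integrable (fun p : ℝ => a n * p ^ (2 * n)) μ :=
    fun n hn => (hpow _ (by grind)).const_mul _
  have hintegral : ∫ p, f p ∂μ = 1 + ∑ n ∈ Finset.Icc 1 N, a n * ∫ p, p ^ (2 * n) ∂μ := by
    simp only [hf]
    rw [integral_add (integrable_const 1) (integrable_finsetSum _ hterm),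
      integral_finsetSum _ hterm, integral_const, probReal_univ, one_smul]
    simp only [integral_const_mul]
  have hsqrt : Real.sqrt V ^ 2 ≤ ∫ p, p ^ 2 ∂μ := by
    rw [Real.sq_sqrt']
    exact max_le (by rw [hV]; nlinarith [sq_nonneg m]) (integral_nonneg fun p => sq_nonneg p)
  rw [hintegral, hf, ge_iff_le]
  gcongr with n hn
  · exact ha n
  obtain ⟨hn1, hnN⟩ := Finset.mem_Icc.1 hn
  calc Real.sqrt V ^ (2 * n) = (Real.sqrt V ^ 2) ^ n := pow_mul _ _ _
    _ ≤ (∫ p, p ^ 2 ∂μ) ^ n := by gcongr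
    _ ≤ ∫ p, p ^ (2 * n) ∂μ :=
      integral_sq_pow_le_integral_pow n (hpow 2 (by omega)) (hpow _ (by omega))

/-- Jensen-type estimate for modifications with non-negative even
Taylor coefficients: for `f(p) = 1 + Σ_{n=1}^N a_n p^{2n}` with `a_n ≥ 0` and a
probability measure `μ` with finite `2N`-th moment, mean `m` and variance `V`,
one has `∫ f dμ ≥ f(√V)`. -/
theorem jensen_modification_bound
    (N : ℕ) (hN : 1 ≤ N) (a : ℕ → ℝ) (ha : ∀ n, 0 ≤ a n)
    (f : ℝ → ℝ)
    (hf : ∀ p : ℝ, f p = 1 + ∑ n ∈ Finset.Icc 1 N, a n * p ^ (2 * n))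
    (μ : Measure ℝ) [IsProbabilityMeasure μ]
    (hmom : Integrable (fun p : ℝ => |p| ^ (2 * N)) μ)
    (m : ℝ) (hm : m = ∫ p : ℝ, p ∂μ)
    (V : ℝ) (hV : V = (∫ p : ℝ, p ^ 2 ∂μ) - m ^ 2) :
    (∫ p : ℝ, f p ∂μ) ≥ f (Real.sqrt V) :=
  jensen_modification_bound_general N a ha f hf μ hmom m V hV
end

section
/- Let N ≥ 1, f(p) = 1 + Σ_{n=1}^N a_n p^{2n} with a_n ≥ 0, k_max := ∫₀^∞ dp/f(p), I = (−k_max, k_max), and let p : I → ℝ be differentiable with p'(k) = f(p(k)). Let ψ : ℝ → ℂ be smooth with compact support contained in I and ∫ |ψ|² dk = 1, and define ⟨x⟩ := ∫ conj(ψ) · i ψ' dk, Var x := ∫ |ψ'|² dk − ⟨x⟩², ⟨p⟩ := ∫ p(k)|ψ|² dk, Var p := ∫ p(k)²|ψ|² dk − ⟨p⟩². If Var p > 0, then Var x ≥ f(√(Var p))² / (4 Var p). -/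
open MeasureTheory Set
open scoped ENNReal

/-- glue continuity -/
lemma aux_cont {E : Type*} [NormedAddCommGroup E] {g : ℝ → E} {I K : Set ℝ}
    (hIo : IsOpen I) (hKc : IsClosed K) (hKI : K ⊆ I)
    (hg : ContinuousOn g I) (h0 : ∀ k ∉ K, g k = 0) : Continuous g := by
  rw [continuous_iff_continuousAt]
  intro k
  by_cases hk : k ∈ I
  · exact hg.continuousAt (hIo.mem_nhds hk)
  · have hk' : k ∉ K := fun h => hk (hKI h)
    have hev : ∀ᶠ x in nhds k, g x = 0 :=
      Filter.eventually_of_mem (hKc.isOpen_compl.mem_nhds hk') h0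
    exact ContinuousAt.congr continuousAt_const (hev.mono fun x hx => hx.symm)

lemma aux_compsupp {E : Type*} [NormedAddCommGroup E] {g : ℝ → E} {K : Set ℝ}
    (hK : IsCompact K) (h0 : ∀ k ∉ K, g k = 0) : HasCompactSupport g := by
  apply HasCompactSupport.of_support_subset_isCompact hK
  intro x hx
  by_contra h
  exact hx (h0 x h)

lemma aux_integrable {E : Type*} [NormedAddCommGroup E] {g : ℝ → E} {I K : Set ℝ}
    (hIo : IsOpen I) (hKc : IsCompact K) (hKI : K ⊆ I)
    (hc : ContinuousOn g I) (h0 : ∀ k ∉ K, g k = 0) :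
    MeasureTheory.Integrable g :=
  (aux_cont hIo hKc.isClosed hKI hc h0).integrable_of_hasCompactSupport (aux_compsupp hKc h0)

/-- integral of a global derivative of a compactly supported function is zero -/
lemma aux_int_deriv_zero {F G : ℝ → ℝ} (hFG : ∀ k, HasDerivAt F (G k) k)
    (hG : Continuous G) (hGsupp : HasCompactSupport G) (hFsupp : HasCompactSupport F) :
    ∫ k, G k = 0 := by
  obtain ⟨R, hR⟩ := (hFsupp.union hGsupp).isBounded.subset_closedBall 0
  have hR' : tsupport F ∪ tsupport G ⊆ Icc (-R) R := by
    rwa [Real.closedBall_eq_Icc, zero_sub, zero_add] at hR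
  set R' := |R| + 1 with hR'def
  have hRR' : Icc (-R) R ⊆ Ioc (-R') R' := by
    intro x hx
    simp only [mem_Icc] at hx
    have h1 := abs_nonneg R; have h2 := neg_abs_le R; have h3 := le_abs_self R
    constructor <;> simp only [hR'def] <;> [linarith [hx.1]; linarith [hx.2]]
  have hsub : tsupport F ∪ tsupport G ⊆ Ioc (-R') R' := hR'.trans hRR'
  have h1 : ∫ k, G k = ∫ k in (-R')..R', G k := by
    rw [intervalIntegral.integral_eq_integral_of_support_subset]
    exact (subset_tsupport G).trans (fun x hx => hsub (Or.inr hx))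
  rw [h1, intervalIntegral.integral_eq_sub_of_hasDerivAt (fun x _ => hFG x)
    (hG.intervalIntegrable _ _)]
  have hF0 : ∀ x ∉ Icc (-R) R, F x = 0 := by
    intro x hx
    exact image_eq_zero_of_notMem_tsupport (fun h => hx (hR' (Or.inl h)))
  have h1 := abs_nonneg R; have h2 := neg_abs_le R; have h3 := le_abs_self R
  rw [hF0 R' (by simp only [mem_Icc, hR'def, not_and_or]; right; push_neg; linarith),
    hF0 (-R') (by simp only [mem_Icc, hR'def, not_and_or]; left; push_neg; linarith)]
  ring

lemma aux_rho_deriv {ψ : ℝ → ℂ} {k : ℝ} {d : ℂ} (hd : HasDerivAt ψ d k) :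
    HasDerivAt (fun k => ‖ψ k‖^2) (2 * ((starRingEnd ℂ) d * ψ k).re) k := by
  have hre : HasDerivAt (fun k => (ψ k).re) d.re k :=
    (Complex.reCLM.hasFDerivAt.comp_hasDerivAt k hd)
  have him : HasDerivAt (fun k => (ψ k).im) d.im k :=
    (Complex.imCLM.hasFDerivAt.comp_hasDerivAt k hd)
  have h : HasDerivAt (fun k => (ψ k).re * (ψ k).re + (ψ k).im * (ψ k).im)
      (d.re * (ψ k).re + (ψ k).re * d.re + (d.im * (ψ k).im + (ψ k).im * d.im)) k :=
    (hre.mul hre).add (him.mul him)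
  have heq : (fun k => ‖ψ k‖^2) = fun k => (ψ k).re * (ψ k).re + (ψ k).im * (ψ k).im := by
    funext x
    rw [Complex.sq_norm, Complex.normSq_apply]
  rw [heq]
  convert h using 1
  simp [Complex.mul_re]
  ring

lemma aux_tangent {t M : ℝ} (ht : 0 ≤ t) (hM : 0 < M) (n : ℕ) (hn : 1 ≤ n) :
    M^n + n * M^(n-1) * (t - M) ≤ t^n := by
  obtain ⟨m, rfl⟩ : ∃ m, n = m + 1 := ⟨n-1, (Nat.succ_pred_eq_of_pos hn).symm⟩
  have ha : -2 ≤ t/M - 1 := by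
    have : 0 ≤ t/M := div_nonneg ht hM.le
    linarith
  have h := one_add_mul_le_pow ha (m+1)
  have key : (1 + (t/M - 1))^(m+1) = t^(m+1)/M^(m+1) := by
    rw [show (1 + (t/M-1)) = t/M by ring, div_pow]
  rw [key] at h
  have hMn : (0:ℝ) < M^(m+1) := pow_pos hM _
  have h2 := (le_div_iff₀ hMn).mp h
  simp only [Nat.add_sub_cancel]
  calc M^(m+1) + (↑(m+1):ℝ) * M^m * (t - M)
      = (1 + (↑(m+1):ℝ) * (t/M - 1)) * M^(m+1) := by field_simp; ring
    _ ≤ t^(m+1) := h2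

lemma aux_norm_u (z w : ℂ) (m : ℝ) :
    ‖Complex.I * z - (m:ℂ) * w‖^2
      = ‖z‖^2 + m^2*‖w‖^2 - 2*m*((starRingEnd ℂ) w * (Complex.I * z)).re := by
  simp only [Complex.sq_norm, Complex.normSq_apply, Complex.sub_re,
    Complex.sub_im, Complex.mul_re, Complex.mul_im, Complex.I_re, Complex.I_im,
    Complex.ofReal_re, Complex.ofReal_im, Complex.conj_re, Complex.conj_im]
  ring

lemma aux_norm_v (r : ℝ) (w : ℂ) : ‖(r:ℂ) * w‖^2 = r^2 * ‖w‖^2 := by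
  rw [norm_mul, mul_pow, Complex.norm_real, Real.norm_eq_abs, sq_abs]

lemma aux_im_uv (z w : ℂ) (m r : ℝ) :
    ((starRingEnd ℂ) (Complex.I * z - (m:ℂ) * w) * ((r:ℂ) * w)).im
      = -r * ((starRingEnd ℂ) z * w).re := by
  simp only [map_sub, map_mul, Complex.conj_I, Complex.conj_ofReal, Complex.sub_im,
    Complex.mul_re, Complex.mul_im, Complex.neg_re, Complex.neg_im, Complex.I_re,
    Complex.I_im, Complex.ofReal_re, Complex.ofReal_im, Complex.conj_re, Complex.conj_im,
    neg_mul, Complex.sub_re]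
  ring

lemma aux_norm_t (z w : ℂ) (t : ℝ) :
    ‖z + (t:ℂ) * (Complex.I * w)‖^2
      = ‖z‖^2 + t^2*‖w‖^2 - 2*t*((starRingEnd ℂ) z * w).im := by
  simp only [Complex.sq_norm, Complex.normSq_apply, Complex.add_re,
    Complex.add_im, Complex.mul_re, Complex.mul_im, Complex.I_re, Complex.I_im,
    Complex.ofReal_re, Complex.ofReal_im, Complex.conj_re, Complex.conj_im]
  ring

set_option maxHeartbeats 1000000 in
/-- state-independent (but generally non-optimal) uncertainty
relation `Var x ≥ f(√(Var p))² / (4 Var p)` for a modification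
`f(p) = 1 + Σ_{n=1}^N a_n p^{2n}` with `a_n ≥ 0`, in the unmodified momentum
representation on the cut-off interval `I = (−k_max, k_max)`. -/
theorem state_independent_uncertainty
    (N : ℕ) (hN : 1 ≤ N) (a : ℕ → ℝ) (ha : ∀ n, 0 ≤ a n)
    (f : ℝ → ℝ)
    (hf : ∀ q : ℝ, f q = 1 + ∑ n ∈ Finset.Icc 1 N, a n * q ^ (2 * n))
    (kmax : ℝ≥0∞)
    (hkmax : kmax = ∫⁻ q in Set.Ioi (0 : ℝ), ENNReal.ofReal (1 / f q))
    (I : Set ℝ) (hI : I = {k : ℝ | ENNReal.ofReal |k| < kmax})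
    (p : ℝ → ℝ) (hp : ∀ k ∈ I, HasDerivAt p (f (p k)) k)
    (ψ : ℝ → ℂ) (hψ_smooth : ContDiff ℝ (⊤ : ℕ∞) ψ)
    (hψ_comp : HasCompactSupport ψ) (hψ_supp : tsupport ψ ⊆ I)
    (hψ_norm : (∫ k : ℝ, ‖ψ k‖ ^ 2) = 1)
    (meanx : ℝ)
    (hmx : (meanx : ℂ) = ∫ k : ℝ, (starRingEnd ℂ) (ψ k) * (Complex.I * deriv ψ k))
    (varx : ℝ) (hvx : varx = (∫ k : ℝ, ‖deriv ψ k‖ ^ 2) - meanx ^ 2)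
    (meanp : ℝ) (hmp : meanp = ∫ k : ℝ, p k * ‖ψ k‖ ^ 2)
    (varp : ℝ) (hvp : varp = (∫ k : ℝ, p k ^ 2 * ‖ψ k‖ ^ 2) - meanp ^ 2)
    (hvarp_pos : 0 < varp) :
    varx ≥ f (Real.sqrt varp) ^ 2 / (4 * varp) := by
  have hIo : IsOpen I := by
    rw [hI]
    exact isOpen_lt (ENNReal.continuous_ofReal.comp continuous_abs) continuous_const
  set K := tsupport ψ with hKdef
  have hKc : IsCompact K := hψ_comp
  have hψ_diff : Differentiable ℝ ψ := hψ_smooth.differentiable (by simp)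
  have hψ_cont : Continuous ψ := hψ_diff.continuous
  have hψ'_cont : Continuous (deriv ψ) := hψ_smooth.continuous_deriv (by simp)
  have hψ0 : ∀ k ∉ K, ψ k = 0 := fun k hk => image_eq_zero_of_notMem_tsupport hk
  have hψ'0 : ∀ k ∉ K, deriv ψ k = 0 := by
    intro k hk
    by_contra h
    exact hk (support_deriv_subset (by simpa [Function.mem_support] using h))
  -- density and its derivative
  set ρ : ℝ → ℝ := fun k => ‖ψ k‖^2 with hρdef
  set ρ' : ℝ → ℝ := fun k => 2 * ((starRingEnd ℂ) (deriv ψ k) * ψ k).re with hρ'def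
  have hρd : ∀ k, HasDerivAt ρ (ρ' k) k := fun k => aux_rho_deriv (hψ_diff k).hasDerivAt
  have hρ_cont : Continuous ρ := (hψ_cont.norm).pow 2
  have hρ'_cont : Continuous ρ' :=
    continuous_const.mul ((Complex.continuous_re.comp
      ((Complex.continuous_conj.comp hψ'_cont).mul hψ_cont)))
  have hρ0 : ∀ k ∉ K, ρ k = 0 := fun k hk => by simp [hρdef, hψ0 k hk]
  have hρ'0 : ∀ k ∉ K, ρ' k = 0 := fun k hk => by simp [hρ'def, hψ0 k hk]
  have hρ_nonneg : ∀ k, 0 ≤ ρ k := fun k => pow_nonneg (norm_nonneg _) 2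
  have hρ_int : Integrable ρ := aux_integrable hIo hKc hψ_supp hρ_cont.continuousOn hρ0
  have hρ_norm : ∫ k, ρ k = 1 := hψ_norm
  -- continuity of f and p
  have hfc : Continuous f := by
    have : f = fun q => 1 + ∑ n ∈ Finset.Icc 1 N, a n * q ^ (2 * n) := funext hf
    rw [this]
    exact continuous_const.add (continuous_finset_sum _ fun n _ =>
      continuous_const.mul (continuous_pow _))
  have hpc : ContinuousOn p I := fun k hk => ((hp k hk).continuousAt).continuousWithinAt
  -- integrability of the various integrands
  have int_pow : ∀ n : ℕ, Integrable (fun k => p k ^ n * ρ k) := fun n =>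
    aux_integrable hIo hKc hψ_supp ((hpc.pow n).mul hρ_cont.continuousOn)
      (fun k hk => by rw [hρ0 k hk]; ring)
  have int_pρ : Integrable (fun k => p k * ρ k) := by
    have := int_pow 1; simpa using this
  have int_p2ρ : Integrable (fun k => p k ^ 2 * ρ k) := int_pow 2
  have int_fpρ : Integrable (fun k => f (p k) * ρ k) :=
    aux_integrable hIo hKc hψ_supp ((hfc.comp_continuousOn hpc).mul hρ_cont.continuousOn)
      (fun k hk => by rw [hρ0 k hk]; ring)
  have int_pρ' : Integrable (fun k => p k * ρ' k) :=
    aux_integrable hIo hKc hψ_supp (hpc.mul hρ'_cont.continuousOn)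
      (fun k hk => by rw [hρ'0 k hk]; ring)
  have int_ψ'2 : Integrable (fun k => ‖deriv ψ k‖^2) :=
    aux_integrable hIo hKc hψ_supp ((hψ'_cont.norm.pow 2).continuousOn)
      (fun k hk => by rw [hψ'0 k hk]; simp)
  have int_cross : Integrable (fun k => (starRingEnd ℂ) (ψ k) * (Complex.I * deriv ψ k)) :=
    aux_integrable hIo hKc hψ_supp
      (((Complex.continuous_conj.comp hψ_cont).mul (continuous_const.mul hψ'_cont)).continuousOn)
      (fun k hk => by rw [hψ0 k hk]; simp)
  -- u and v
  set u : ℝ → ℂ := fun k => Complex.I * deriv ψ k - (meanx:ℂ) * ψ k with hudef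
  set v : ℝ → ℂ := fun k => ((p k - meanp : ℝ):ℂ) * ψ k with hvdef
  have hu0 : ∀ k ∉ K, u k = 0 := fun k hk => by simp [hudef, hψ0 k hk, hψ'0 k hk]
  have hv0 : ∀ k ∉ K, v k = 0 := fun k hk => by simp [hvdef, hψ0 k hk]
  have hu_cont : Continuous u := (continuous_const.mul hψ'_cont).sub (continuous_const.mul hψ_cont)
  have hv_contOn : ContinuousOn v I :=
    (Complex.continuous_ofReal.comp_continuousOn (hpc.sub continuousOn_const)).mul
      hψ_cont.continuousOn
  have int_u2 : Integrable (fun k => ‖u k‖^2) :=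
    aux_integrable hIo hKc hψ_supp ((hu_cont.norm.pow 2).continuousOn)
      (fun k hk => by rw [hu0 k hk]; simp)
  have int_v2 : Integrable (fun k => ‖v k‖^2) :=
    aux_integrable hIo hKc hψ_supp ((hv_contOn.norm.pow 2))
      (fun k hk => by rw [hv0 k hk]; simp)
  have int_uv : Integrable (fun k => (starRingEnd ℂ) (u k) * v k) :=
    aux_integrable hIo hKc hψ_supp
      (((Complex.continuous_conj.comp hu_cont).continuousOn).mul hv_contOn)
      (fun k hk => by rw [hu0 k hk, hv0 k hk]; simp)
  -- Step 1 : ∫ ‖u‖² = varx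
  have int_cross_re : Integrable (fun k => ((starRingEnd ℂ) (ψ k) * (Complex.I * deriv ψ k)).re) :=
    aux_integrable hIo hKc hψ_supp
      ((Complex.continuous_re.comp
        ((Complex.continuous_conj.comp hψ_cont).mul (continuous_const.mul hψ'_cont))).continuousOn)
      (fun k hk => by rw [hψ0 k hk]; simp)
  have int_uv_im : Integrable (fun k => ((starRingEnd ℂ) (u k) * v k).im) :=
    aux_integrable hIo hKc hψ_supp
      ((Complex.continuous_im.comp_continuousOn
        (((Complex.continuous_conj.comp hu_cont).continuousOn).mul hv_contOn)))
      (fun k hk => by rw [hu0 k hk, hv0 k hk]; simp)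
  have hcross_re : ∫ k, ((starRingEnd ℂ) (ψ k) * (Complex.I * deriv ψ k)).re = meanx := by
    have h := integral_re int_cross
    simp only [RCLike.re_eq_complex_re] at h
    rw [h, ← hmx, Complex.ofReal_re]
  have hA : ∫ k, ‖u k‖^2 = varx := by
    have h1 : ∫ k, ‖u k‖^2 = ∫ k, (‖deriv ψ k‖^2 + meanx^2 * ρ k
        - 2*meanx*((starRingEnd ℂ) (ψ k) * (Complex.I * deriv ψ k)).re) := by
      congr 1; funext k; exact aux_norm_u (deriv ψ k) (ψ k) meanx
    have i1 : Integrable (fun k => ‖deriv ψ k‖^2 + meanx^2 * ρ k) :=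
      int_ψ'2.add (hρ_int.const_mul _)
    have i2 : Integrable (fun k => 2*meanx*((starRingEnd ℂ) (ψ k) * (Complex.I * deriv ψ k)).re) :=
      int_cross_re.const_mul _
    have i3 : Integrable (fun k => meanx^2 * ρ k) := hρ_int.const_mul _
    rw [h1, integral_sub i1 i2, integral_add int_ψ'2 i3, integral_const_mul,
      integral_const_mul, hρ_norm, hcross_re, hvx]
    ring
  -- Step 2 : ∫ ‖v‖² = varp
  have hB : ∫ k, ‖v k‖^2 = varp := by
    have h1 : ∫ k, ‖v k‖^2 = ∫ k, (p k^2 * ρ k - 2*meanp*(p k * ρ k) + meanp^2 * ρ k) := by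
      congr 1; funext k
      rw [hvdef]
      show ‖((p k - meanp : ℝ):ℂ) * ψ k‖^2 = _
      rw [aux_norm_v]
      show (p k - meanp)^2 * ρ k = _
      ring
    have i1 : Integrable (fun k => p k^2 * ρ k - 2*meanp*(p k * ρ k)) :=
      int_p2ρ.sub (int_pρ.const_mul _)
    have i2 : Integrable (fun k => meanp^2 * ρ k) := hρ_int.const_mul _
    have i3 : Integrable (fun k => 2*meanp*(p k * ρ k)) := int_pρ.const_mul _
    rw [h1, integral_add i1 i2, integral_sub int_p2ρ i3, integral_const_mul,
      integral_const_mul, hρ_norm, ← hmp, hvp]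
    ring
  -- Step 3 : integration by parts
  have hintρ' : ∫ k, ρ' k = 0 := by
    apply aux_int_deriv_zero hρd hρ'_cont (aux_compsupp hKc hρ'0) (aux_compsupp hKc hρ0)
  have hparts : ∫ k, p k * ρ' k = - ∫ k, f (p k) * ρ k := by
    set F : ℝ → ℝ := fun k => p k * ρ k with hFdef
    set G : ℝ → ℝ := fun k => f (p k) * ρ k + p k * ρ' k with hGdef
    have hFG : ∀ k, HasDerivAt F (G k) k := by
      intro k
      by_cases hk : k ∈ I
      · exact (hp k hk).mul (hρd k)
      · have hk' : k ∉ K := fun h => hk (hψ_supp h)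
        have hev : F =ᶠ[nhds k] (fun _ => 0) :=
          Filter.eventually_of_mem (hKc.isClosed.isOpen_compl.mem_nhds hk')
            (fun x hx => by simp [hFdef, hρ0 x hx])
        have : HasDerivAt F 0 k := (hasDerivAt_const k (0:ℝ)).congr_of_eventuallyEq hev
        have hGk : G k = 0 := by simp [hGdef, hρ0 k hk', hρ'0 k hk']
        rw [hGk]; exact this
    have hG_cont : Continuous G :=
      aux_cont hIo hKc.isClosed hψ_supp
        (((hfc.comp_continuousOn hpc).mul hρ_cont.continuousOn).add
          (hpc.mul hρ'_cont.continuousOn))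
        (fun k hk => by simp [hGdef, hρ0 k hk, hρ'0 k hk])
    have hG0 : ∀ k ∉ K, G k = 0 := fun k hk => by simp [hGdef, hρ0 k hk, hρ'0 k hk]
    have hF0 : ∀ k ∉ K, F k = 0 := fun k hk => by simp [hFdef, hρ0 k hk]
    have hzero : ∫ k, G k = 0 :=
      aux_int_deriv_zero hFG hG_cont (aux_compsupp hKc hG0) (aux_compsupp hKc hF0)
    have hsplit : ∫ k, G k = (∫ k, f (p k) * ρ k) + ∫ k, p k * ρ' k :=
      integral_add int_fpρ int_pρ'
    rw [hsplit] at hzero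
    linarith
  -- Step 4 : the imaginary part of ⟨u, v⟩
  set C : ℝ := ∫ k, f (p k) * ρ k with hCdef
  have hIm : ∫ k, ((starRingEnd ℂ) (u k) * v k).im = C / 2 := by
    have h1 : ∀ k, ((starRingEnd ℂ) (u k) * v k).im
        = -(1/2) * (p k * ρ' k) + (meanp/2) * ρ' k := by
      intro k
      rw [hudef, hvdef]
      show ((starRingEnd ℂ) (Complex.I * deriv ψ k - (meanx:ℂ) * ψ k)
        * (((p k - meanp : ℝ):ℂ) * ψ k)).im = _
      rw [aux_im_uv]
      show -(p k - meanp) * (((starRingEnd ℂ) (deriv ψ k)) * ψ k).re = _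
      simp only [hρ'def]
      ring
    have hρ'_int : Integrable ρ' :=
      aux_integrable hIo hKc hψ_supp hρ'_cont.continuousOn hρ'0
    have h2 : ∫ k, ((starRingEnd ℂ) (u k) * v k).im
        = ∫ k, (-(1/2) * (p k * ρ' k) + (meanp/2) * ρ' k) := by
      congr 1; funext k; exact h1 k
    have i1 : Integrable (fun k => -(1/2) * (p k * ρ' k)) := int_pρ'.const_mul _
    have i2 : Integrable (fun k => (meanp/2) * ρ' k) := hρ'_int.const_mul _
    rw [h2, integral_add i1 i2, integral_const_mul, integral_const_mul, hparts, hintρ']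
    ring
  -- Step 5 : Cauchy-Schwarz via nonnegativity of a quadratic
  have key : ∀ t : ℝ, 0 ≤ varx + t^2 * varp - 2*t*(C/2) := by
    intro t
    have h0 : 0 ≤ ∫ k, ‖u k + (t:ℂ) * (Complex.I * v k)‖^2 :=
      integral_nonneg (fun k => pow_nonneg (norm_nonneg _) 2)
    have hexp : ∫ k, ‖u k + (t:ℂ) * (Complex.I * v k)‖^2
        = ∫ k, (‖u k‖^2 + t^2*‖v k‖^2 - 2*t*((starRingEnd ℂ) (u k) * v k).im) := by
      congr 1; funext k; exact aux_norm_t (u k) (v k) t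
    have i1 : Integrable (fun k => ‖u k‖^2 + t^2*‖v k‖^2) := int_u2.add (int_v2.const_mul _)
    have i2 : Integrable (fun k => 2*t*((starRingEnd ℂ) (u k) * v k).im) := int_uv_im.const_mul _
    have i3 : Integrable (fun k => t^2*‖v k‖^2) := int_v2.const_mul _
    rw [hexp, integral_sub i1 i2, integral_add int_u2 i3, integral_const_mul,
      integral_const_mul, hA, hB, hIm] at h0
    linarith
  have hquad : C^2 ≤ 4 * varp * varx := by
    set t : ℝ := C/(2*varp) with htdef
    have h := key t
    have hC : C = 2*varp*t := by
      rw [htdef]; field_simp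
    nlinarith [h, hvarp_pos, sq_nonneg t]
  -- Step 6 : Jensen-type lower bound for C
  set M : ℝ := varp + meanp^2 with hMdef
  have hMpos : 0 < M := by nlinarith [sq_nonneg meanp]
  have hM_int : ∫ k, p k^2 * ρ k = M := by
    rw [hMdef, hvp]; ring
  have hCexp : C = 1 + ∑ n ∈ Finset.Icc 1 N, a n * ∫ k, p k ^ (2*n) * ρ k := by
    rw [hCdef]
    have heq : (fun k => f (p k) * ρ k)
        = fun k => ρ k + ∑ n ∈ Finset.Icc 1 N, a n * (p k ^ (2*n) * ρ k) := by
      funext k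
      rw [hf (p k), add_mul, one_mul, Finset.sum_mul]
      congr 1
      exact Finset.sum_congr rfl (fun n _ => by ring)
    have isum : Integrable (fun k => ∑ n ∈ Finset.Icc 1 N, a n * (p k ^ (2*n) * ρ k)) := by
      apply integrable_finset_sum
      intro n _
      exact (int_pow (2*n)).const_mul _
    rw [heq, integral_add hρ_int isum,
      integral_finset_sum _ (fun n _ => (int_pow (2*n)).const_mul _), hρ_norm]
    congr 1
    exact Finset.sum_congr rfl (fun n _ => by rw [integral_const_mul])
  have hJ : ∀ n ∈ Finset.Icc 1 N, varp^n ≤ ∫ k, p k^(2*n) * ρ k := by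
    intro n hn
    have hn1 : 1 ≤ n := (Finset.mem_Icc.mp hn).1
    have hpt : ∀ k, (M^n - n*M^(n-1)*M) * ρ k + (n*M^(n-1)) * (p k^2 * ρ k)
        ≤ p k^(2*n) * ρ k := by
      intro k
      have h1 := aux_tangent (sq_nonneg (p k)) hMpos n hn1
      have h2 := mul_le_mul_of_nonneg_right h1 (hρ_nonneg k)
      calc (M^n - n*M^(n-1)*M) * ρ k + (n*M^(n-1)) * (p k^2 * ρ k)
          = (M^n + n * M^(n-1) * (p k^2 - M)) * ρ k := by ring
        _ ≤ (p k^2)^n * ρ k := h2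
        _ = p k^(2*n) * ρ k := by rw [← pow_mul]
    have hint_le := integral_mono
      ((hρ_int.const_mul _).add (int_p2ρ.const_mul _)) (int_pow (2*n)) hpt
    have hlhs : ∫ k, ((M^n - n*M^(n-1)*M) * ρ k + (n*M^(n-1)) * (p k^2 * ρ k)) = M^n := by
      have i1 : Integrable (fun k => (M^n - n*M^(n-1)*M) * ρ k) := hρ_int.const_mul _
      have i2 : Integrable (fun k => (n*M^(n-1)) * (p k^2 * ρ k)) := int_p2ρ.const_mul _
      rw [integral_add i1 i2, integral_const_mul, integral_const_mul, hρ_norm, hM_int]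
      have hpow : M^(n-1)*M = M^n := by
        rw [← pow_succ, Nat.sub_add_cancel hn1]
      rw [mul_one, mul_assoc (↑n:ℝ), hpow]
      ring
    have hMn : varp^n ≤ M^n := pow_le_pow_left₀ hvarp_pos.le (by nlinarith [sq_nonneg meanp]) n
    calc varp^n ≤ M^n := hMn
      _ = ∫ k, ((M^n - n*M^(n-1)*M) * ρ k + (n*M^(n-1)) * (p k^2 * ρ k)) := hlhs.symm
      _ ≤ ∫ k, p k^(2*n) * ρ k := hint_le
  have hfs : f (Real.sqrt varp) = 1 + ∑ n ∈ Finset.Icc 1 N, a n * varp^n := by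
    rw [hf]
    congr 1
    exact Finset.sum_congr rfl (fun n _ => by
      rw [pow_mul, Real.sq_sqrt hvarp_pos.le])
  have hC_ge : f (Real.sqrt varp) ≤ C := by
    rw [hfs, hCexp]
    have := Finset.sum_le_sum (fun n hn =>
      mul_le_mul_of_nonneg_left (hJ n hn) (ha n))
    linarith
  have hf_pos : 0 < f (Real.sqrt varp) := by
    rw [hfs]
    have : 0 ≤ ∑ n ∈ Finset.Icc 1 N, a n * varp^n :=
      Finset.sum_nonneg (fun n _ => mul_nonneg (ha n) (pow_nonneg hvarp_pos.le n))
    linarith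
  have hfsq : f (Real.sqrt varp)^2 ≤ C^2 := by
    nlinarith [hf_pos, hC_ge]
  rw [ge_iff_le, div_le_iff₀ (by positivity : (0:ℝ) < 4 * varp)]
  nlinarith [hquad, hfsq]
end

section
/- Let β > 0, γ ∈ ℝ, and define ψ(k) := cos(√β k)^γ for k ∈ (−π/(2√β), π/(2√β)). Then for every k in this interval, −ψ''(k) + γ(γ−1) β tan²(√β k) ψ(k) = γ β ψ(k). -/
open MeasureTheory Set

/-- The states `ψ(k) = cos(√β k)^γ` are eigenfunctions of the
modified harmonic oscillator Schrödinger operator: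
`−ψ'' + γ(γ−1) β tan²(√β k) ψ = γ β ψ` on `(−π/(2√β), π/(2√β))`. -/
theorem cos_power_eigenfunction
    (β : ℝ) (hβ : 0 < β) (γ : ℝ)
    (ψ : ℝ → ℝ)
    (hψ : ∀ k : ℝ, ψ k = Real.cos (Real.sqrt β * k) ^ γ) :
    ∀ k ∈ Set.Ioo (-(Real.pi / (2 * Real.sqrt β))) (Real.pi / (2 * Real.sqrt β)),
      -(deriv (deriv ψ) k) +
        γ * (γ - 1) * β * Real.tan (Real.sqrt β * k) ^ 2 * ψ k = γ * β * ψ k := by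
  intro k hk
  set s := Real.sqrt β with hs_def
  have hs : 0 < s := Real.sqrt_pos.mpr hβ
  have hs2 : s * s = β := Real.mul_self_sqrt hβ.le
  have hbound : s * (Real.pi / (2 * s)) = Real.pi / 2 := by
    field_simp
  have hcos : ∀ x ∈ Set.Ioo (-(Real.pi / (2 * s))) (Real.pi / (2 * s)),
      0 < Real.cos (s * x) := by
    intro x hx
    apply Real.cos_pos_of_mem_Ioo
    constructor
    · have h1 := (mul_lt_mul_iff_right₀ hs).mpr hx.1
      rw [mul_neg, hbound] at h1
      exact h1
    · have h2 := (mul_lt_mul_iff_right₀ hs).mpr hx.2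
      rw [hbound] at h2
      exact h2
  have hψeq : ψ = fun y => Real.cos (s * y) ^ γ := funext hψ
  have hd1 : ∀ x : ℝ, HasDerivAt (fun y => Real.cos (s * y)) (-Real.sin (s * x) * s) x := by
    intro x
    have h0 : HasDerivAt (fun y : ℝ => s * y) s x := by
      simpa using (hasDerivAt_id x).const_mul s
    exact (Real.hasDerivAt_cos (s * x)).comp x h0
  have hd2 : ∀ x : ℝ, HasDerivAt (fun y => Real.sin (s * y)) (Real.cos (s * x) * s) x := by
    intro x
    have h0 : HasDerivAt (fun y : ℝ => s * y) s x := by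
      simpa using (hasDerivAt_id x).const_mul s
    exact (Real.hasDerivAt_sin (s * x)).comp x h0
  set g : ℝ → ℝ := fun x => -Real.sin (s * x) * s * γ * Real.cos (s * x) ^ (γ - 1) with hg_def
  have hψd : ∀ x ∈ Set.Ioo (-(Real.pi / (2 * s))) (Real.pi / (2 * s)),
      HasDerivAt ψ (g x) x := by
    intro x hx
    have h := (hd1 x).rpow_const (p := γ) (Or.inl (hcos x hx).ne')
    rw [hψeq]
    convert h using 1
  have hc : 0 < Real.cos (s * k) := hcos k hk
  -- second derivative
  have hA : HasDerivAt (fun y => -Real.sin (s * y) * s * γ)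
      (-(Real.cos (s * k) * s) * s * γ) k := ((hd2 k).neg.mul_const s).mul_const γ
  have hB : HasDerivAt (fun y => Real.cos (s * y) ^ (γ - 1))
      ((-Real.sin (s * k) * s) * (γ - 1) * Real.cos (s * k) ^ (γ - 2)) k := by
    have h := (hd1 k).rpow_const (p := γ - 1) (Or.inl hc.ne')
    convert h using 2
    ring_nf
  have hgd : HasDerivAt g
      ((-(Real.cos (s * k) * s) * s * γ) * Real.cos (s * k) ^ (γ - 1) +
        (-Real.sin (s * k) * s * γ) *
          ((-Real.sin (s * k) * s) * (γ - 1) * Real.cos (s * k) ^ (γ - 2))) k :=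
    hA.mul hB
  have hev : deriv ψ =ᶠ[nhds k] g := by
    filter_upwards [isOpen_Ioo.mem_nhds hk] with x hx
    exact (hψd x hx).deriv
  have hdd : deriv (deriv ψ) k =
      (-(Real.cos (s * k) * s) * s * γ) * Real.cos (s * k) ^ (γ - 1) +
        (-Real.sin (s * k) * s * γ) *
          ((-Real.sin (s * k) * s) * (γ - 1) * Real.cos (s * k) ^ (γ - 2)) := by
    rw [hev.deriv_eq]
    exact hgd.deriv
  rw [hdd, hψ k]
  set c := Real.cos (s * k)
  set t := Real.sin (s * k)
  have h1 : c ^ γ = c ^ (γ - 1) * c := by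
    rw [← Real.rpow_add_one hc.ne' (γ - 1)]
    ring_nf
  have h2 : c ^ γ = c ^ (γ - 2) * c ^ (2 : ℕ) := by
    rw [← Real.rpow_natCast c 2, ← Real.rpow_add hc]
    norm_num
  have htan : Real.tan (s * k) = t / c := Real.tan_eq_sin_div_cos (s * k)
  have h3 : c ^ (γ - 1) = c ^ (γ - 2) * c := by
    rw [← Real.rpow_add_one hc.ne' (γ - 2)]
    ring_nf
  rw [htan, h2, h3, ← hs2]
  field_simp
  ring
end

section
/- Let K > 0 and for ψ ∈ L²(ℝ) let φ(x) := (2π)^{−1/2} ∫ e^{i k x} ψ(k) dk denote its Fourier transform. (a) For every ψ ∈ L²(ℝ) with ∫ |ψ(k)|² dk = 1 and support contained in [−K, K], and for every x ∈ ℝ, one has |φ(x)|² ≤ K/π. (b) For ψ₀ := (2K)^{−1/2} 𝟙_{[−K,K]}, which is normalized and supported in [−K,K], one has |φ₀(0)|² = K/π. Hence the supremum over all such normalized ψ of sup_x |φ(x)|² equals exactly K/π. -/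
/-!
Since `‖exp (i k x)‖ = 1`, `‖φ(x)‖ ≤ (2π)^{-1/2} ∫ ‖ψ‖`, and Cauchy–Schwarz against the indicator
of `[-K, K]` bounds `∫ ‖ψ‖` by `√(2K) · ‖ψ‖₂ = √(2K)`; squaring gives `K / π`. Equality in
Cauchy–Schwarz needs `‖ψ‖` constant on `[-K, K]`, and at `x = 0` the phase is trivial, so the
normalized indicator `ψ₀` attains the bound.
-/

open MeasureTheory Set

theorem integral_norm_le_sqrt_measureReal_univ_mul_sqrt {α E : Type*} [MeasurableSpace α]
    [NormedAddCommGroup E] {μ : Measure α} [IsFiniteMeasure μ] {f : α → E}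
    (hf : AEStronglyMeasurable f μ) (hf2 : Integrable (fun x => ‖f x‖ ^ 2) μ) :
    ∫ x, ‖f x‖ ∂μ ≤ √(μ.real univ) * √(∫ x, ‖f x‖ ^ 2 ∂μ) := by
  have hL2 : MemLp (fun x => ‖f x‖) (ENNReal.ofReal 2) μ := by
    rw [ENNReal.ofReal_ofNat]; exact (memLp_two_iff_integrable_sq hf.norm).2 hf2
  have := integral_mul_le_Lp_mul_Lq_of_nonneg Real.HolderConjugate.two_two
    (.of_forall fun x => norm_nonneg (f x)) (.of_forall fun _ => zero_le_one) hL2 (memLp_const 1)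
  simpa [Real.sqrt_eq_rpow, mul_comm] using this

theorem integral_norm_le_sqrt_measureReal_mul_sqrt_of_support_subset {α E : Type*}
    [MeasurableSpace α] [NormedAddCommGroup E] {μ : Measure α} {s : Set α} {f : α → E}
    (hμs : μ s ≠ ⊤) (hfs : Function.support f ⊆ s)
    (hf : AEStronglyMeasurable f μ) (hf2 : Integrable (fun x => ‖f x‖ ^ 2) μ) :
    ∫ x, ‖f x‖ ∂μ ≤ √(μ.real s) * √(∫ x, ‖f x‖ ^ 2 ∂μ) := by
  have : Fact (μ s < ⊤) := ⟨hμs.lt_top⟩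
  have hvanish {g : E → ℝ} (hg : g 0 = 0) : ∫ x in s, g (f x) ∂μ = ∫ x, g (f x) ∂μ :=
    setIntegral_eq_integral_of_forall_compl_eq_zero fun x hx => by
      rw [Function.notMem_support.mp fun h => hx (hfs h), hg]
  rw [← hvanish norm_zero, ← hvanish (g := fun y => ‖y‖ ^ 2) (by simp),
    ← measureReal_restrict_apply_univ]
  exact integral_norm_le_sqrt_measureReal_univ_mul_sqrt hf.restrict hf2.restrict

open Complex in
theorem norm_integral_exp_I_mul_mul_le {μ : Measure ℝ} (ψ : ℝ → ℂ) (x : ℝ) :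
    ‖∫ k, exp (I * k * x) * ψ k ∂μ‖ ≤ ∫ k, ‖ψ k‖ ∂μ := by
  refine (norm_integral_le_integral_norm _).trans_eq (integral_congr_ae (.of_forall fun k => ?_))
  simp only [norm_mul, mul_assoc, ← ofReal_mul, norm_exp_I_mul_ofReal, one_mul]

theorem integral_norm_indicator_const_sq {α E : Type*} [MeasurableSpace α]
    [NormedAddCommGroup E] {μ : Measure α} {s : Set α} (hs : MeasurableSet s) (c : E) :
    ∫ x, ‖s.indicator (fun _ => c) x‖ ^ 2 ∂μ = μ.real s * ‖c‖ ^ 2 := by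
  have h x : ‖s.indicator (fun _ => c) x‖ ^ 2 = s.indicator (fun _ => ‖c‖ ^ 2) x := by
    by_cases hx : x ∈ s <;> simp [hx]
  simp_rw [h]
  rw [integral_indicator_const _ hs, smul_eq_mul]

/-- Min-entropy minimal length. (a) For every normalized
`ψ ∈ L²(ℝ)` supported in `[−K, K]` the position density `|φ|²` (with `φ` the
Fourier transform of `ψ`) satisfies `|φ(x)|² ≤ K/π` for all `x`. (b) The bound
is attained at `x = 0` by `ψ₀ = (2K)^{−1/2} 𝟙_{[−K,K]}`. Hence
`sup_ψ sup_x |φ(x)|² = K/π` and `Γ^∞_min = −log(K/π)`. -/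
theorem min_entropy_minimal_length
    (K : ℝ) (hK : 0 < K)
    (Φ : (ℝ → ℂ) → ℝ → ℂ)
    (hΦ : ∀ (ψ : ℝ → ℂ) (x : ℝ), Φ ψ x = ((Real.sqrt (2 * Real.pi) : ℝ) : ℂ)⁻¹ *
      ∫ k : ℝ, Complex.exp (Complex.I * (k : ℂ) * (x : ℂ)) * ψ k)
    (ψ₀ : ℝ → ℂ)
    (hψ₀ : ∀ k : ℝ, ψ₀ k =
      if |k| ≤ K then (((Real.sqrt (2 * K))⁻¹ : ℝ) : ℂ) else 0) :
    (∀ ψ : ℝ → ℂ, Measurable ψ → Function.support ψ ⊆ Set.Icc (-K) K →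
      (∫ k : ℝ, ‖ψ k‖ ^ 2) = 1 →
      ∀ x : ℝ, ‖Φ ψ x‖ ^ 2 ≤ K / Real.pi) ∧
    (∫ k : ℝ, ‖ψ₀ k‖ ^ 2) = 1 ∧
    Function.support ψ₀ ⊆ Set.Icc (-K) K ∧
    ‖Φ ψ₀ 0‖ ^ 2 = K / Real.pi := by
  have hbound : ((√(2 * Real.pi))⁻¹ * √(2 * K)) ^ 2 = K / Real.pi := by
    rw [mul_pow, inv_pow, Real.sq_sqrt (by positivity), Real.sq_sqrt (by positivity)]
    field_simp
  have hvol : volume.real (Icc (-K) K) = 2 * K := by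
    rw [Real.volume_real_Icc_of_le (by linarith)]; ring
  have hψ₀_eq : ψ₀ = (Icc (-K) K).indicator (fun _ => (((√(2 * K))⁻¹ : ℝ) : ℂ)) := by
    ext k
    simp only [hψ₀, indicator_apply, mem_Icc, abs_le]
  have hnormΦ (ψ : ℝ → ℂ) (x : ℝ) : ‖Φ ψ x‖ = (√(2 * Real.pi))⁻¹ *
      ‖∫ k : ℝ, Complex.exp (Complex.I * (k : ℂ) * (x : ℂ)) * ψ k‖ := by
    rw [hΦ, norm_mul, norm_inv, Complex.norm_real, Real.norm_of_nonneg (Real.sqrt_nonneg _)]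
  refine ⟨fun ψ hψ hsupp hnorm x => ?_, ?_, ?_, ?_⟩
  · have hint : Integrable (fun k => ‖ψ k‖ ^ 2) :=
      Integrable.of_integral_ne_zero (by rw [hnorm]; exact one_ne_zero)
    have hL1 := integral_norm_le_sqrt_measureReal_mul_sqrt_of_support_subset
      measure_Icc_lt_top.ne hsupp hψ.aestronglyMeasurable hint
    rw [hvol, hnorm, Real.sqrt_one, mul_one] at hL1
    rw [← hbound, hnormΦ]
    gcongr
    exact (norm_integral_exp_I_mul_mul_le ψ x).trans hL1
  · rw [hψ₀_eq, integral_norm_indicator_const_sq measurableSet_Icc, hvol, Complex.norm_real,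
      Real.norm_of_nonneg (by positivity), inv_pow, Real.sq_sqrt (by positivity)]
    field_simp
  · rw [hψ₀_eq]
    exact support_indicator_subset
  · have hφ₀ : ∫ k : ℝ, Complex.exp (Complex.I * k * (0 : ℝ)) * ψ₀ k = ((√(2 * K) : ℝ) : ℂ) := by
      simp only [Complex.ofReal_zero, mul_zero, Complex.exp_zero, one_mul, hψ₀_eq]
      rw [integral_indicator_const _ measurableSet_Icc, hvol, Complex.real_smul,
        ← Complex.ofReal_mul, ← div_eq_mul_inv, Real.div_sqrt]
    rw [← hbound, hnormΦ, hφ₀, Complex.norm_real, Real.norm_of_nonneg (Real.sqrt_nonneg _)]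
end
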